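/- arXiv:1803.03793 — 5 statements merged into one kernel-verified Lean document; each statement's English description precedes it below -/
import Mathlib

section
/- Let a_1,…,a_k be nonzero integers that are either all positive or all negative, let b be an integer such that a_1x_1+⋯+a_kx_k = b has a solution in pairwise distinct positive integers, and let A be the 1×k matrix (a_1 … a_k). Then for any p = p(n) = o(1), with high probability Breaker wins the (A,b)-game on [n]_p. -/
variable {V : Type*} [DecidableEq V]

/-- Maker has a winning strategy in the Maker-Breaker game, given whose turn it is
(`true` = Maker to move), the remaining unclaimed board `R`, and Maker's current set `M`.
Maker wins if at the end of the game (all elements claimed) her set satisfies `win`. -/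
def makerWinsAux (win : Finset V → Prop) : Bool → Finset V → Finset V → Prop
  | true, R, M =>
      if R.Nonempty then ∃ x, ∃ _h : x ∈ R, makerWinsAux win false (R.erase x) (insert x M)
      else win M
  | false, R, M =>
      if R.Nonempty then ∀ x, x ∈ R → makerWinsAux win true (R.erase x) M
      else win M
termination_by _ R _ => R.card
decreasing_by
  · exact Finset.card_erase_lt_of_mem ‹x ∈ R›
  · exact Finset.card_erase_lt_of_mem ‹x ∈ R›

/-- Breaker has a winning strategy (Maker moves first). -/
def breakerWinsAux (win : Finset V → Prop) : Bool → Finset V → Finset V → Prop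
  | true, R, M =>
      if R.Nonempty then ∀ x, x ∈ R → breakerWinsAux win false (R.erase x) (insert x M)
      else ¬ win M
  | false, R, M =>
      if R.Nonempty then ∃ x, ∃ _h : x ∈ R, breakerWinsAux win true (R.erase x) M
      else ¬ win M
termination_by _ R _ => R.card
decreasing_by
  · exact Finset.card_erase_lt_of_mem ‹x ∈ R›
  · exact Finset.card_erase_lt_of_mem ‹x ∈ R›

/-- Maker wins the Maker-Breaker game on board `X` with winning condition `win`. -/
def MakerWins (win : Finset V → Prop) (X : Finset V) : Prop := makerWinsAux win true X ∅

/-- Breaker wins the Maker-Breaker game on board `X` with winning condition `win`. -/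
def BreakerWins (win : Finset V → Prop) (X : Finset V) : Prop := breakerWinsAux win true X ∅

/-- Maker's winning condition in the `(A,b)`-game: her claimed set `M` contains all entries of
some `k`-distinct solution (in positive integers) of `A x = b`. -/
def RadoWin {l k : ℕ} (A : Matrix (Fin l) (Fin k) ℤ) (b : Fin l → ℤ) (M : Finset ℕ) : Prop :=
  ∃ x : Fin k → ℕ, Function.Injective x ∧ (∀ i, x i ∈ M) ∧
    A.mulVec (fun i => (x i : ℤ)) = b

/-- The pair `(A,b)` is irredundant: `A x = b` has a `k`-distinct solution in positive integers. -/
def PairIrredundant {l k : ℕ} (A : Matrix (Fin l) (Fin k) ℤ) (b : Fin l → ℤ) : Prop :=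
  ∃ x : Fin k → ℕ, Function.Injective x ∧ (∀ i, 0 < x i) ∧
    A.mulVec (fun i => (x i : ℤ)) = b

/-- The matrix `A` is irredundant: `A x = 0` has a `k`-distinct solution in positive integers. -/
def MatIrredundant {l k : ℕ} (A : Matrix (Fin l) (Fin k) ℤ) : Prop :=
  PairIrredundant A 0

/-- Property (*): no rational linear combination of the rows of `A` has exactly two
nonzero entries. -/
def PropertyStar {l k : ℕ} (A : Matrix (Fin l) (Fin k) ℤ) : Prop :=
  ∀ c : Fin l → ℚ,
    (Finset.univ.filter fun j : Fin k => (∑ i, c i * (A i j : ℚ)) ≠ 0).card ≠ 2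

/-- The rank (over `ℚ`) of an integer matrix. -/
noncomputable def rankQ {l k : ℕ} (A : Matrix (Fin l) (Fin k) ℤ) : ℕ :=
  (A.map (Int.cast : ℤ → ℚ)).rank

/-- The rank (over `ℚ`) of the matrix `A_{W̄}` formed by the columns of `A` indexed by the
complement of `W`. -/
noncomputable def rankRestrict {l k : ℕ} (A : Matrix (Fin l) (Fin k) ℤ)
    (W : Finset (Fin k)) : ℕ :=
  ((A.map (Int.cast : ℤ → ℚ)).submatrix id (fun j : {j : Fin k // j ∈ Wᶜ} => j.1)).rank

/-- The parameter `m(A)`. -/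
noncomputable def mIndex {l k : ℕ} (A : Matrix (Fin l) (Fin k) ℤ) : ℝ :=
  sSup {x : ℝ | ∃ W : Finset (Fin k), 2 ≤ W.card ∧
    x = ((W.card : ℝ) - 1) / (((W.card : ℝ) - 1) + (rankRestrict A W : ℝ) - (rankQ A : ℝ))}

/-- `A` (an `ℓ×k` matrix of full rank `ℓ`) is strictly balanced. -/
def StrictlyBalanced {l k : ℕ} (A : Matrix (Fin l) (Fin k) ℤ) : Prop :=
  ∀ W : Finset (Fin k), 2 ≤ W.card → W.card < k →
    ((W.card : ℝ) - 1) / (((W.card : ℝ) - 1) + (rankRestrict A W : ℝ) - (l : ℝ))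
      < ((k : ℝ) - 1) / ((k : ℝ) - 1 - (l : ℝ))

open Classical in
/-- `μ(n,A,b)`: the maximum size of a subset of `[n] = {1,…,n}` containing no `k`-distinct
solution to `A x = b`. -/
noncomputable def muMax {l k : ℕ} (n : ℕ) (A : Matrix (Fin l) (Fin k) ℤ) (b : Fin l → ℤ) : ℕ :=
  (((Finset.Icc 1 n).powerset.filter fun S => ¬ RadoWin A b S).sup Finset.card)

open Classical in
/-- The probability that the random subset `[n]_p` (each element of `{1,…,n}` included
independently with probability `p`) satisfies the property `P`. -/
noncomputable def probRandomSubset (n : ℕ) (p : ℝ) (P : Finset ℕ → Prop) : ℝ :=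
  ∑ S ∈ (Finset.Icc 1 n).powerset,
    if P S then p ^ S.card * (1 - p) ^ (n - S.card) else 0

/-- Maker wins the `(A,b)`-game on the board `X` (Maker moves first). -/
def MakerWinsRado {l k : ℕ} (A : Matrix (Fin l) (Fin k) ℤ) (b : Fin l → ℤ)
    (X : Finset ℕ) : Prop :=
  MakerWins (RadoWin A b) X

/-- Breaker wins the `(A,b)`-game on the board `X` (Maker moves first). -/
def BreakerWinsRado {l k : ℕ} (A : Matrix (Fin l) (Fin k) ℤ) (b : Fin l → ℤ)
    (X : Finset ℕ) : Prop :=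
  BreakerWins (RadoWin A b) X

lemma breakerAux_of_no_win {win : Finset V → Prop} (S : Finset V)
    (h : ∀ N ⊆ S, ¬ win N) :
    ∀ (n : ℕ) (t : Bool) (R M : Finset V), R.card = n → R ⊆ S → M ⊆ S →
      breakerWinsAux win t R M := by
  intro n
  induction n using Nat.strong_induction_on with
  | _ n ih =>
    intro t R M hcard hR hM
    cases t with
    | true =>
      rw [breakerWinsAux]
      split_ifs with hne
      · intro x hx
        exact ih _ (hcard ▸ Finset.card_erase_lt_of_mem hx) _ _ _ rfl
          ((Finset.erase_subset _ _).trans hR)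
          (Finset.insert_subset (hR hx) hM)
      · exact h M hM
    | false =>
      rw [breakerWinsAux]
      split_ifs with hne
      · obtain ⟨x, hx⟩ := hne
        exact ⟨x, hx, ih _ (hcard ▸ Finset.card_erase_lt_of_mem hx) _ _ _ rfl
          ((Finset.erase_subset _ _).trans hR) hM⟩
      · exact h M hM

lemma mySumBern (U : Finset ℕ) (p : ℝ) :
    ∑ S ∈ U.powerset, p ^ S.card * (1 - p) ^ (U.card - S.card) = 1 := by
  have h := Finset.prod_add (fun _ : ℕ => p) (fun _ : ℕ => (1 - p)) U
  simp only [Finset.prod_const] at h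
  have h2 : ∀ S ∈ U.powerset, p ^ S.card * (1 - p) ^ (U \ S).card
      = p ^ S.card * (1 - p) ^ (U.card - S.card) := by
    intro S hS
    rw [Finset.card_sdiff_of_subset (Finset.mem_powerset.mp hS)]
  rw [Finset.sum_congr rfl h2] at h
  rw [← h]
  simp

lemma mySumBernSubset (U D : Finset ℕ) (hD : D ⊆ U) (p : ℝ) :
    ∑ S ∈ D.powerset, p ^ S.card * (1 - p) ^ (U.card - S.card)
      = (1 - p) ^ (U.card - D.card) := by
  have h2 : ∀ S ∈ D.powerset, p ^ S.card * (1 - p) ^ (U.card - S.card)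
      = (p ^ S.card * (1 - p) ^ (D.card - S.card)) * (1 - p) ^ (U.card - D.card) := by
    intro S hS
    have h1 : S.card ≤ D.card := Finset.card_le_card (Finset.mem_powerset.mp hS)
    have h3 : D.card ≤ U.card := Finset.card_le_card hD
    rw [mul_assoc, ← pow_add]
    congr 2
    omega
  rw [Finset.sum_congr rfl h2, ← Finset.sum_mul, mySumBern, one_mul]

lemma noSolBig {k : ℕ} (hk : 0 < k) (a : Fin k → ℤ) (hpos : ∀ i, 1 ≤ a i) (b : ℤ)
    (x : Fin k → ℕ) (hx : ∀ i, b.natAbs < x i) : ∑ i, a i * (x i : ℤ) ≠ b := by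
  intro h
  have h1 : ∀ i, (x i : ℤ) ≤ a i * x i := fun i =>
    le_mul_of_one_le_left (by positivity) (hpos i)
  have h2 : (x ⟨0, hk⟩ : ℤ) ≤ ∑ i, a i * (x i : ℤ) := by
    refine le_trans (h1 _) (Finset.single_le_sum (f := fun i => a i * (x i : ℤ))
      (fun i _ => mul_nonneg (by linarith [hpos i]) (by positivity)) (Finset.mem_univ _))
  have h3 : b ≤ (b.natAbs : ℤ) := Int.le_natAbs
  have h4 : (b.natAbs : ℤ) < (x ⟨0, hk⟩ : ℤ) := by exact_mod_cast hx ⟨0, hk⟩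
  omega

lemma noRadoWin {k : ℕ} (hk : 0 < k) (a : Fin k → ℤ)
    (hsign : (∀ i, 0 < a i) ∨ (∀ i, a i < 0)) (b : ℤ)
    (S : Finset ℕ) (hS : ∀ y ∈ S, b.natAbs < y) :
    ∀ N ⊆ S, ¬ RadoWin (Matrix.of fun _ : Fin 1 => a) (fun _ => b) N := by
  rintro N hN ⟨x, hinj, hmem, heq⟩
  have h0 := congrFun heq 0
  simp only [Matrix.mulVec, dotProduct, Matrix.of_apply] at h0
  have hx : ∀ i, b.natAbs < x i := fun i => hS _ (hN (hmem i))
  cases hsign with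
  | inl hpos =>
    exact noSolBig hk a (fun i => by have := hpos i; omega) b x hx h0
  | inr hneg =>
    have h1 : ∑ i, (-a i) * (x i : ℤ) = -b := by
      simp only [neg_mul]
      rw [Finset.sum_neg_distrib, h0]
    exact noSolBig hk (fun i => -a i) (fun i => by have := hneg i; omega) (-b) x
      (by simpa using hx) h1
/-- Theorem 1.2(iii)(a) of the paper. For a single linear equation with
all coefficients positive (or all negative) whose pair `(A,b)` is irredundant, for any
`p = o(1)`, w.h.p. Breaker wins the `(A,b)`-game on `[n]_p`. -/
theorem all_positive_coefficients_breaker_win {k : ℕ} (hk : 0 < k) (a : Fin k → ℤ)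
    (ha : ∀ i, a i ≠ 0) (hsign : (∀ i, 0 < a i) ∨ (∀ i, a i < 0)) (b : ℤ)
    (hAb : ∃ x : Fin k → ℕ, Function.Injective x ∧ (∀ i, 0 < x i) ∧
      ∑ i, a i * (x i : ℤ) = b)
    (p : ℕ → ℝ) (hp : ∀ n, 0 ≤ p n ∧ p n ≤ 1)
    (hp0 : Filter.Tendsto p Filter.atTop (nhds 0)) :
    Filter.Tendsto
      (fun n => probRandomSubset n (p n) (fun S =>
        BreakerWinsRado (Matrix.of fun _ : Fin 1 => a) (fun _ => b) S))
      Filter.atTop (nhds 1) := by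
  classical
  have hg : Filter.Tendsto (fun n => (1 - p n) ^ b.natAbs) Filter.atTop (nhds 1) := by
    have h1 : Filter.Tendsto (fun n => 1 - p n) Filter.atTop (nhds (1 - 0)) :=
      tendsto_const_nhds.sub hp0
    have := h1.pow b.natAbs
    simpa using this
  refine tendsto_of_tendsto_of_tendsto_of_le_of_le' hg tendsto_const_nhds ?_ ?_
  · -- lower bound eventually
    filter_upwards [Filter.eventually_ge_atTop b.natAbs] with n hn
    have hp1 := (hp n).1
    have hp2 := (hp n).2
    have hcard : (Finset.Icc 1 n).card = n := by simp
    have hD : Finset.Icc (b.natAbs + 1) n ⊆ Finset.Icc 1 n :=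
      Finset.Icc_subset_Icc (by omega) le_rfl
    have key : ∀ S ⊆ Finset.Icc (b.natAbs + 1) n,
        BreakerWinsRado (Matrix.of fun _ : Fin 1 => a) (fun _ => b) S := by
      intro S hSsub
      have hbig : ∀ y ∈ S, b.natAbs < y := fun y hy => by
        have := (Finset.mem_Icc.mp (hSsub hy)).1; omega
      exact breakerAux_of_no_win S (noRadoWin hk a hsign b S hbig) _ true S ∅ rfl
        le_rfl (Finset.empty_subset S)
    have e1 : ∑ S ∈ (Finset.Icc (b.natAbs + 1) n).powerset,
        (p n) ^ S.card * (1 - p n) ^ (n - S.card) = (1 - p n) ^ b.natAbs := by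
      have h := mySumBernSubset (Finset.Icc 1 n) (Finset.Icc (b.natAbs + 1) n) hD (p n)
      rw [hcard, Nat.card_Icc] at h
      rw [h]
      congr 1
      omega
    rw [← e1]
    rw [show ∑ S ∈ (Finset.Icc (b.natAbs + 1) n).powerset,
          (p n) ^ S.card * (1 - p n) ^ (n - S.card)
        = ∑ S ∈ (Finset.Icc 1 n).powerset,
            if S ∈ (Finset.Icc (b.natAbs + 1) n).powerset
            then (p n) ^ S.card * (1 - p n) ^ (n - S.card) else 0 by
      rw [Finset.sum_ite_mem,
        Finset.inter_eq_right.mpr (Finset.powerset_mono.mpr hD)]]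
    unfold probRandomSubset
    refine Finset.sum_le_sum fun S hS => ?_
    by_cases h : S ∈ (Finset.Icc (b.natAbs + 1) n).powerset
    · rw [if_pos h, if_pos (key S (Finset.mem_powerset.mp h))]
    · rw [if_neg h]
      split_ifs with h2
      · exact mul_nonneg (pow_nonneg hp1 _) (pow_nonneg (by linarith) _)
      · exact le_rfl
  · -- upper bound
    filter_upwards with n
    have hp1 := (hp n).1
    have hp2 := (hp n).2
    have hcard : (Finset.Icc 1 n).card = n := by simp
    have h1 := mySumBern (Finset.Icc 1 n) (p n)
    rw [hcard] at h1
    unfold probRandomSubset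
    refine le_trans (Finset.sum_le_sum fun S hS => ?_) (le_of_eq h1)
    split_ifs with h2
    · exact le_rfl
    · exact mul_nonneg (pow_nonneg hp1 _) (pow_nonneg (by linarith) _)
end

section
/- Let a be a nonzero integer and b an integer such that a·x_1 − a·x_2 = b has a solution in two distinct positive integers, and let A be the 1×2 matrix (a −a). Then: if p = p(n) satisfies p·n^{1/3} → ∞, with high probability Maker wins the (A,b)-game on [n]_p; and if p·n^{1/3} → 0, with high probability Breaker wins the (A,b)-game on [n]_p. -/
variable {V : Type*} [DecidableEq V]

/-! ### Auxiliary lemmas -/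

section Aux

open Classical in
/-- Probability-style weighted sum over subsets of an arbitrary ground set. -/
noncomputable def PSaux (p : ℝ) (U : Finset ℕ) (P : Finset ℕ → Prop) : ℝ :=
  ∑ S ∈ U.powerset, if P S then p ^ S.card * (1 - p) ^ (U \ S).card else 0

lemma PSaux_true (p : ℝ) (U : Finset ℕ) : PSaux p U (fun _ => True) = 1 := by
  classical
  unfold PSaux
  simp only [if_true]
  have h := Finset.prod_add (fun _ : ℕ => p) (fun _ : ℕ => (1 - p)) U
  simp only [Finset.prod_const, add_sub_cancel, one_pow] at h
  rw [← h]

lemma PSaux_congr (p : ℝ) (U : Finset ℕ) {P Q : Finset ℕ → Prop}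
    (h : ∀ S ⊆ U, (P S ↔ Q S)) : PSaux p U P = PSaux p U Q := by
  classical
  unfold PSaux
  refine Finset.sum_congr rfl fun S hS => ?_
  rw [Finset.mem_powerset] at hS
  by_cases hPS : P S
  · rw [if_pos hPS, if_pos ((h S hS).mp hPS)]
  · rw [if_neg hPS, if_neg (fun hq => hPS ((h S hS).mpr hq))]

lemma weight_nonneg {p : ℝ} (hp0 : 0 ≤ p) (hp1 : p ≤ 1) (a b : ℕ) :
    0 ≤ p ^ a * (1 - p) ^ b :=
  mul_nonneg (pow_nonneg hp0 a) (pow_nonneg (by linarith) b)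

lemma PSaux_mono {p : ℝ} (hp0 : 0 ≤ p) (hp1 : p ≤ 1) (U : Finset ℕ) {P Q : Finset ℕ → Prop}
    (h : ∀ S ⊆ U, P S → Q S) : PSaux p U P ≤ PSaux p U Q := by
  classical
  refine Finset.sum_le_sum fun S hS => ?_
  rw [Finset.mem_powerset] at hS
  by_cases hPS : P S
  · rw [if_pos hPS, if_pos (h S hS hPS)]
  · rw [if_neg hPS]; split
    · exact weight_nonneg hp0 hp1 _ _
    · exact le_refl 0

lemma PSaux_le_one {p : ℝ} (hp0 : 0 ≤ p) (hp1 : p ≤ 1) (U : Finset ℕ) (P : Finset ℕ → Prop) :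
    PSaux p U P ≤ 1 := by
  rw [← PSaux_true p U]
  exact PSaux_mono hp0 hp1 U (fun S _ _ => trivial)

lemma PSaux_compl (p : ℝ) (U : Finset ℕ) (P : Finset ℕ → Prop) :
    PSaux p U P + PSaux p U (fun S => ¬ P S) = 1 := by
  classical
  rw [← PSaux_true p U]
  unfold PSaux
  rw [← Finset.sum_add_distrib]
  refine Finset.sum_congr rfl fun S _ => ?_
  by_cases hPS : P S <;> simp [hPS]

lemma PSaux_union_bound {p : ℝ} (hp0 : 0 ≤ p) (hp1 : p ≤ 1) (U : Finset ℕ)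
    {P : Finset ℕ → Prop} {ι : Type*} (J : Finset ι) (Q : ι → Finset ℕ → Prop)
    (h : ∀ S ⊆ U, P S → ∃ j ∈ J, Q j S) :
    PSaux p U P ≤ ∑ j ∈ J, PSaux p U (Q j) := by
  classical
  unfold PSaux
  rw [Finset.sum_comm]
  refine Finset.sum_le_sum fun S hS => ?_
  rw [Finset.mem_powerset] at hS
  by_cases hPS : P S
  · rw [if_pos hPS]
    obtain ⟨j, hj, hQ⟩ := h S hS hPS
    calc p ^ S.card * (1 - p) ^ (U \ S).card
        = ∑ i ∈ {j}, if Q i S then p ^ S.card * (1 - p) ^ (U \ S).card else 0 := by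
          simp [hQ]
      _ ≤ _ := Finset.sum_le_sum_of_subset_of_nonneg (Finset.singleton_subset_iff.2 hj)
          (fun i _ _ => by split; exacts [weight_nonneg hp0 hp1 _ _, le_refl 0])
  · rw [if_neg hPS]
    exact Finset.sum_nonneg fun j _ => by
      split; exacts [weight_nonneg hp0 hp1 _ _, le_refl 0]

lemma PSaux_split (p : ℝ) {U W : Finset ℕ} (hUW : Disjoint U W)
    (f g : Finset ℕ → Prop) :
    PSaux p (U ∪ W) (fun S => f (S ∩ U) ∧ g (S ∩ W)) = PSaux p U f * PSaux p W g := by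
  classical
  unfold PSaux
  rw [Finset.sum_mul_sum, ← Finset.sum_product']
  refine Finset.sum_nbij' (fun S => (S ∩ U, S ∩ W)) (fun AB => AB.1 ∪ AB.2) ?_ ?_ ?_ ?_ ?_
  · intro S hS
    rw [Finset.mem_powerset] at hS
    simp only [Finset.mem_product, Finset.mem_powerset]
    exact ⟨Finset.inter_subset_right, Finset.inter_subset_right⟩
  · intro AB hAB
    simp only [Finset.mem_product, Finset.mem_powerset] at hAB
    rw [Finset.mem_powerset]
    exact Finset.union_subset_union hAB.1 hAB.2
  · intro S hS
    rw [Finset.mem_powerset] at hS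
    simp only
    rw [← Finset.inter_union_distrib_left, Finset.inter_eq_left.2 hS]
  · intro AB hAB
    simp only [Finset.mem_product, Finset.mem_powerset] at hAB
    obtain ⟨hA, hB⟩ := hAB
    have h1 : (AB.1 ∪ AB.2) ∩ U = AB.1 := by
      rw [Finset.union_inter_distrib_right, Finset.inter_eq_left.2 hA,
        Finset.disjoint_iff_inter_eq_empty.1 (Finset.disjoint_of_subset_left hB hUW.symm),
        Finset.union_empty]
    have h2 : (AB.1 ∪ AB.2) ∩ W = AB.2 := by
      rw [Finset.union_inter_distrib_right, Finset.inter_eq_left.2 hB,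
        Finset.disjoint_iff_inter_eq_empty.1 (Finset.disjoint_of_subset_left hA hUW),
        Finset.empty_union]
    simp [h1, h2]
  · intro S hS
    rw [Finset.mem_powerset] at hS
    have hA : S ∩ U ⊆ U := Finset.inter_subset_right
    have hB : S ∩ W ⊆ W := Finset.inter_subset_right
    have hdisj : Disjoint (S ∩ U) (S ∩ W) :=
      Finset.disjoint_of_subset_left hA (Finset.disjoint_of_subset_right hB hUW)
    have hST : S = (S ∩ U) ∪ (S ∩ W) := by
      rw [← Finset.inter_union_distrib_left, Finset.inter_eq_left.2 hS]
    have hcard : S.card = (S ∩ U).card + (S ∩ W).card := by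
      conv_lhs => rw [hST]
      exact Finset.card_union_of_disjoint hdisj
    have hcompl : (U ∪ W) \ S = (U \ (S ∩ U)) ∪ (W \ (S ∩ W)) := by
      ext x
      simp only [Finset.mem_sdiff, Finset.mem_union, Finset.mem_inter]
      constructor
      · rintro ⟨hx | hx, hxS⟩
        · exact Or.inl ⟨hx, fun h => hxS h.1⟩
        · exact Or.inr ⟨hx, fun h => hxS h.1⟩
      · rintro (⟨hx, hxS⟩ | ⟨hx, hxS⟩)
        · exact ⟨Or.inl hx, fun h => hxS ⟨h, hx⟩⟩
        · exact ⟨Or.inr hx, fun h => hxS ⟨h, hx⟩⟩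
    have hdisj2 : Disjoint (U \ (S ∩ U)) (W \ (S ∩ W)) :=
      Finset.disjoint_of_subset_left (Finset.sdiff_subset)
        (Finset.disjoint_of_subset_right (Finset.sdiff_subset) hUW)
    have hcard2 : ((U ∪ W) \ S).card = (U \ (S ∩ U)).card + (W \ (S ∩ W)).card := by
      rw [hcompl]; exact Finset.card_union_of_disjoint hdisj2
    by_cases hf : f (S ∩ U) <;> by_cases hg : g (S ∩ W) <;>
      simp [hf, hg, hcard, hcard2, pow_add] <;> ring

lemma PSaux_subset_event (p : ℝ) {T U : Finset ℕ} (hTU : T ⊆ U) :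
    PSaux p U (fun S => T ⊆ S) = p ^ T.card := by
  classical
  have hU : U = T ∪ (U \ T) := (Finset.union_sdiff_of_subset hTU).symm
  have hdisj : Disjoint T (U \ T) := Finset.disjoint_sdiff
  have h1 : PSaux p U (fun S => T ⊆ S)
      = PSaux p (T ∪ (U \ T)) (fun S =>
          (fun A => T ⊆ A) (S ∩ T) ∧ (fun _ => True) (S ∩ (U \ T))) := by
    rw [← hU]
    refine PSaux_congr p U fun S hS => ?_
    simp only [and_true]
    constructor
    · intro h; exact Finset.subset_inter h (le_refl T)
    · intro h; exact h.trans Finset.inter_subset_left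
  have h2 := PSaux_split p hdisj (fun A => T ⊆ A) (fun _ => True)
  rw [h1, h2, PSaux_true, mul_one]
  unfold PSaux
  rw [Finset.sum_eq_single_of_mem T (Finset.mem_powerset_self T)]
  · simp
  · intro A hA hAT
    rw [Finset.mem_powerset] at hA
    rw [if_neg]
    intro h
    exact hAT (Finset.Subset.antisymm hA h)

lemma PSaux_blocks {ι : Type*} [DecidableEq ι] (p : ℝ) (T : ι → Finset ℕ) (J : Finset ι) :
    ∀ (U : Finset ℕ), (∀ j ∈ J, T j ⊆ U) →
    (∀ i ∈ J, ∀ j ∈ J, i ≠ j → Disjoint (T i) (T j)) →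
    PSaux p U (fun S => ∀ j ∈ J, ¬ T j ⊆ S) = ∏ j ∈ J, (1 - p ^ (T j).card) := by
  classical
  induction J using Finset.induction_on with
  | empty =>
      intro U _ _
      rw [Finset.prod_empty]
      have h0 := PSaux_congr p U (P := fun S => ∀ j ∈ (∅ : Finset ι), ¬ T j ⊆ S)
        (Q := fun _ => True) (by simp)
      calc PSaux p U (fun S => ∀ j ∈ (∅ : Finset ι), ¬ T j ⊆ S)
          = PSaux p U (fun _ => True) := h0
        _ = 1 := PSaux_true p U
  | @insert j0 J hj0 ih =>
      intro U hTU hdisj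
      have hT0U : T j0 ⊆ U := hTU j0 (Finset.mem_insert_self _ _)
      have hU : U = T j0 ∪ (U \ T j0) := (Finset.union_sdiff_of_subset hT0U).symm
      have hTiU : ∀ i ∈ J, T i ⊆ U \ T j0 := by
        intro i hi
        refine Finset.subset_sdiff.2 ⟨hTU i (Finset.mem_insert_of_mem hi), ?_⟩
        exact hdisj i (Finset.mem_insert_of_mem hi) j0 (Finset.mem_insert_self _ _)
          (fun h => hj0 (h ▸ hi))
      have key : PSaux p U (fun S => ∀ j ∈ insert j0 J, ¬ T j ⊆ S)
          = PSaux p (T j0 ∪ (U \ T j0)) (fun S =>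
              (fun A => ¬ T j0 ⊆ A) (S ∩ T j0) ∧
              (fun B => ∀ i ∈ J, ¬ T i ⊆ B) (S ∩ (U \ T j0))) := by
        rw [← hU]
        refine PSaux_congr p U fun S hS => ?_
        simp only [Finset.mem_insert, forall_eq_or_imp]
        constructor
        · rintro ⟨h0, hrest⟩
          refine ⟨fun h => h0 (h.trans Finset.inter_subset_left), fun i hi h =>
            hrest i hi (h.trans Finset.inter_subset_left)⟩
        · rintro ⟨h0, hrest⟩
          refine ⟨fun h => h0 (Finset.subset_inter h (le_refl _)), fun i hi h =>
            hrest i hi (Finset.subset_inter h (hTiU i hi))⟩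
      have h2 := PSaux_split p (Finset.disjoint_sdiff (s := T j0) (t := U))
        (fun A => ¬ T j0 ⊆ A) (fun B => ∀ i ∈ J, ¬ T i ⊆ B)
      rw [key, h2,
        ih (U \ T j0) hTiU (fun i hi j hj => hdisj i (Finset.mem_insert_of_mem hi) j
          (Finset.mem_insert_of_mem hj)),
        Finset.prod_insert hj0]
      congr 1
      have hcompl := PSaux_compl p (T j0) (fun A => T j0 ⊆ A)
      have hsub := PSaux_subset_event p (le_refl (T j0))
      linarith

lemma prob_eq_PSaux (n : ℕ) (p : ℝ) (P : Finset ℕ → Prop) :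
    probRandomSubset n p P = PSaux p (Finset.Icc 1 n) P := by
  classical
  unfold probRandomSubset PSaux
  refine Finset.sum_congr rfl fun S hS => ?_
  rw [Finset.mem_powerset] at hS
  have h1 : ((Finset.Icc 1 n) \ S).card = n - S.card := by
    rw [Finset.card_sdiff_of_subset hS, Nat.card_Icc]
    omega
  rw [h1]

/-! ### Game lemmas -/

lemma makerWinsAux_true_def (win : Finset V → Prop) (R M : Finset V) :
    makerWinsAux win true R M ↔
      if R.Nonempty then ∃ x, ∃ _h : x ∈ R, makerWinsAux win false (R.erase x) (insert x M)
      else win M := by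
  rw [makerWinsAux]

lemma makerWinsAux_false_def (win : Finset V → Prop) (R M : Finset V) :
    makerWinsAux win false R M ↔
      if R.Nonempty then ∀ x, x ∈ R → makerWinsAux win true (R.erase x) M
      else win M := by
  rw [makerWinsAux]

lemma breakerWinsAux_true_def (win : Finset V → Prop) (R M : Finset V) :
    breakerWinsAux win true R M ↔
      if R.Nonempty then ∀ x, x ∈ R → breakerWinsAux win false (R.erase x) (insert x M)
      else ¬ win M := by
  rw [breakerWinsAux]

lemma breakerWinsAux_false_def (win : Finset V → Prop) (R M : Finset V) :
    breakerWinsAux win false R M ↔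
      if R.Nonempty then ∃ x, ∃ _h : x ∈ R, breakerWinsAux win true (R.erase x) M
      else ¬ win M := by
  rw [breakerWinsAux]

lemma makerAux_of_win {win : Finset V → Prop}
    (hmono : ∀ M M' : Finset V, M ⊆ M' → win M → win M') :
    ∀ (N : ℕ) (R M : Finset V) (t : Bool), R.card ≤ N → win M → makerWinsAux win t R M := by
  intro N
  induction N with
  | zero =>
      intro R M t hR hwin
      have hRe : R = ∅ := Finset.card_eq_zero.1 (Nat.le_zero.1 hR)
      subst hRe
      cases t
      · rw [makerWinsAux_false_def]
        simp [hwin]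
      · rw [makerWinsAux_true_def]
        simp [hwin]
  | succ n ih =>
      intro R M t hR hwin
      cases t
      · rw [makerWinsAux_false_def]
        split
        · intro x hx
          exact ih _ _ _ (by
            have := Finset.card_erase_lt_of_mem hx; omega) hwin
        · exact hwin
      · rw [makerWinsAux_true_def]
        split
        · rename_i hne
          obtain ⟨x, hx⟩ := hne
          exact ⟨x, hx, ih _ _ _ (by have := Finset.card_erase_lt_of_mem hx; omega)
            (hmono _ _ (Finset.subset_insert x M) hwin)⟩
        · exact hwin

lemma maker_strategy {win : Finset V → Prop}
    (hmono : ∀ M M' : Finset V, M ⊆ M' → win M → win M')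
    {R : Finset V} (M : Finset V) {u v w : V}
    (hu : u ∈ R) (hv : v ∈ R) (hw : w ∈ R)
    (huv : u ≠ v) (hvw : v ≠ w) (huw : u ≠ w)
    (h1 : ∀ M' : Finset V, u ∈ M' → v ∈ M' → win M')
    (h2 : ∀ M' : Finset V, v ∈ M' → w ∈ M' → win M') :
    makerWinsAux win true R M := by
  rw [makerWinsAux_true_def, if_pos ⟨v, hv⟩]
  refine ⟨v, hv, ?_⟩
  have huR : u ∈ R.erase v := Finset.mem_erase.2 ⟨huv, hu⟩
  have hwR : w ∈ R.erase v := Finset.mem_erase.2 ⟨Ne.symm hvw, hw⟩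
  rw [makerWinsAux_false_def, if_pos ⟨u, huR⟩]
  intro x hx
  rcases eq_or_ne x u with rfl | hxu
  · have hwR2 : w ∈ (R.erase v).erase x := Finset.mem_erase.2 ⟨fun h => huw h.symm, hwR⟩
    rw [makerWinsAux_true_def, if_pos ⟨w, hwR2⟩]
    refine ⟨w, hwR2, makerAux_of_win hmono _ _ _ _ (le_refl _) ?_⟩
    exact h2 _ (Finset.mem_insert_of_mem (Finset.mem_insert_self v M))
      (Finset.mem_insert_self w _)
  · have huR2 : u ∈ (R.erase v).erase x := Finset.mem_erase.2 ⟨Ne.symm hxu, huR⟩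
    rw [makerWinsAux_true_def, if_pos ⟨u, huR2⟩]
    refine ⟨u, huR2, makerAux_of_win hmono _ _ _ _ (le_refl _) ?_⟩
    exact h1 _ (Finset.mem_insert_self u _)
      (Finset.mem_insert_of_mem (Finset.mem_insert_self v M))

lemma breaker_strategy (e : ℕ) (he : 0 < e) (win : Finset ℕ → Prop)
    (hwin : ∀ M, win M ↔ ∃ m, m ∈ M ∧ m + e ∈ M) :
    ∀ (N : ℕ) (R M : Finset ℕ), R.card ≤ N →
    (¬ ∃ m, m ∈ R ∧ m + e ∈ R ∧ m + e + e ∈ R) →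
    (∀ m ∈ M, ∀ z ∈ R, z ≠ m + e ∧ m ≠ z + e) →
    (∀ m ∈ M, m + e ∉ M) →
    breakerWinsAux win true R M := by
  intro N
  induction N with
  | zero =>
      intro R M hR _ _ hMM
      have hRe : R = ∅ := Finset.card_eq_zero.1 (Nat.le_zero.1 hR)
      subst hRe
      rw [breakerWinsAux_true_def, if_neg (by simp)]
      rintro hw
      obtain ⟨m, hm, hme⟩ := (hwin M).1 hw
      exact hMM m hm hme
  | succ n ih =>
      intro R M hR hRtriple hMR hMM
      rw [breakerWinsAux_true_def]
      split
      · intro x hx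
        have noWin' : ¬ win (insert x M) := by
          intro hw
          obtain ⟨m, hm, hme⟩ := (hwin _).1 hw
          rcases Finset.mem_insert.1 hm with rfl | hmM
          · rcases Finset.mem_insert.1 hme with h | hmeM
            · omega
            · exact (hMR (m + e) hmeM m hx).2 rfl
          · rcases Finset.mem_insert.1 hme with h | hmeM
            · exact (hMR m hmM x hx).1 h.symm
            · exact hMM m hmM hmeM
        have hMM' : ∀ m ∈ insert x M, m + e ∉ insert x M :=
          fun m hm hme => noWin' ((hwin _).2 ⟨m, hm, hme⟩)
        rw [breakerWinsAux_false_def]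
        split
        · rename_i hne
          have hcard : ∀ y, ((R.erase x).erase y).card ≤ n := by
            intro y
            have h1 := Finset.card_erase_lt_of_mem hx
            have h2 := Finset.card_erase_le (s := R.erase x) (a := y)
            omega
          have htriple' : ∀ y, ¬ ∃ m, m ∈ (R.erase x).erase y ∧
              m + e ∈ (R.erase x).erase y ∧ m + e + e ∈ (R.erase x).erase y := by
            rintro y ⟨m, h1, h2, h3⟩
            have hsub : (R.erase x).erase y ⊆ R :=
              (Finset.erase_subset _ _).trans (Finset.erase_subset _ _)
            exact hRtriple ⟨m, hsub h1, hsub h2, hsub h3⟩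
          have hMRold : ∀ y, ∀ m ∈ M, ∀ z ∈ (R.erase x).erase y, z ≠ m + e ∧ m ≠ z + e := by
            intro y m hm z hz
            have hsub : (R.erase x).erase y ⊆ R :=
              (Finset.erase_subset _ _).trans (Finset.erase_subset _ _)
            exact hMR m hm z (hsub hz)
          by_cases hA : x + e ∈ R.erase x
          · refine ⟨x + e, hA, ih _ _ (hcard _) (htriple' _) ?_ hMM'⟩
            intro m hm z hz
            rcases Finset.mem_insert.1 hm with rfl | hmM
            · constructor
              · exact (Finset.mem_erase.1 hz).1
              · intro hxz
                have hzR : z ∈ R := Finset.mem_of_mem_erase (Finset.mem_of_mem_erase hz)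
                have hx2 : z + e + e ∈ R := by
                  have h9 : m + e ∈ R := Finset.mem_of_mem_erase hA
                  have h10 : z + e + e = m + e := by omega
                  rwa [h10]
                exact hRtriple ⟨z, hzR, by rwa [← hxz], hx2⟩
            · exact hMRold _ m hmM z hz
          · by_cases hB : ∃ z ∈ R.erase x, x = z + e
            · obtain ⟨z0, hz0, hz0e⟩ := hB
              refine ⟨z0, hz0, ih _ _ (hcard _) (htriple' _) ?_ hMM'⟩
              intro m hm z hz
              rcases Finset.mem_insert.1 hm with rfl | hmM
              · constructor
                · intro hzm
                  exact hA (hzm ▸ Finset.mem_of_mem_erase hz)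
                · intro hxz
                  have : z = z0 := by omega
                  exact (Finset.mem_erase.1 hz).1 this
              · exact hMRold _ m hmM z hz
            · obtain ⟨y, hy⟩ := hne
              refine ⟨y, hy, ih _ _ (hcard _) (htriple' _) ?_ hMM'⟩
              intro m hm z hz
              rcases Finset.mem_insert.1 hm with rfl | hmM
              · have hzRx : z ∈ R.erase m := Finset.mem_of_mem_erase hz
                constructor
                · intro hzm
                  exact hA (hzm ▸ hzRx)
                · intro hxz
                  exact hB ⟨z, hzRx, hxz⟩
              · exact hMRold _ m hmM z hz
        · exact noWin'
      · rintro hw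
        obtain ⟨m, hm, hme⟩ := (hwin M).1 hw
        exact hMM m hm hme

lemma radoWin_iff_aux (a : ℤ) (ha : a ≠ 0) (d : ℤ) (hdne : d ≠ 0) (M : Finset ℕ) :
    RadoWin (Matrix.of fun _ : Fin 1 => ![a, -a]) (fun _ => a * d) M ↔
      ∃ m, m ∈ M ∧ m + d.natAbs ∈ M := by
  constructor
  · rintro ⟨x, hinj, hmem, heq⟩
    have h0 := congrFun heq 0
    rw [Matrix.mulVec, dotProduct] at h0
    rw [Fin.sum_univ_two] at h0
    simp only [Matrix.of_apply, Matrix.cons_val_zero, Matrix.cons_val_one, Matrix.head_cons]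
      at h0
    have hxy : (x 0 : ℤ) - (x 1 : ℤ) = d := by
      have h1 : a * ((x 0 : ℤ) - x 1) = a * d := by ring_nf; ring_nf at h0; linarith
      exact mul_left_cancel₀ ha h1
    rcases lt_or_gt_of_ne hdne with hneg | hpos
    · exact ⟨x 0, hmem 0, by
        have : x 1 = x 0 + d.natAbs := by omega
        rw [← this]; exact hmem 1⟩
    · exact ⟨x 1, hmem 1, by
        have : x 0 = x 1 + d.natAbs := by omega
        rw [← this]; exact hmem 0⟩
  · rintro ⟨m, hm, hme⟩
    rcases lt_or_gt_of_ne hdne with hneg | hpos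
    · refine ⟨![m, m + d.natAbs], ?_, ?_, ?_⟩
      · intro i j hij
        fin_cases i <;> fin_cases j <;> simp_all <;> omega
      · intro i; fin_cases i <;> simpa
      · funext i
        fin_cases i
        rw [Matrix.mulVec, dotProduct, Fin.sum_univ_two]
        simp only [Matrix.of_apply, Matrix.cons_val_zero, Matrix.cons_val_one, Matrix.head_cons]
        push_cast
        rw [abs_of_neg hneg]; ring
    · refine ⟨![m + d.natAbs, m], ?_, ?_, ?_⟩
      · intro i j hij
        fin_cases i <;> fin_cases j <;> simp_all <;> omega
      · intro i; fin_cases i <;> simpa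
      · funext i
        fin_cases i
        rw [Matrix.mulVec, dotProduct, Fin.sum_univ_two]
        simp only [Matrix.of_apply, Matrix.cons_val_zero, Matrix.cons_val_one, Matrix.head_cons]
        push_cast
        rw [abs_of_pos hpos]; ring

lemma maker_board {win : Finset ℕ → Prop} {e : ℕ} (he : 0 < e)
    (hwin : ∀ M, win M ↔ ∃ m, m ∈ M ∧ m + e ∈ M) {S : Finset ℕ}
    (hS : ∃ m, m ∈ S ∧ m + e ∈ S ∧ m + e + e ∈ S) : MakerWins win S := by
  obtain ⟨m, h1, h2, h3⟩ := hS
  have hmono : ∀ M M' : Finset ℕ, M ⊆ M' → win M → win M' := by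
    intro M M' hsub hw
    obtain ⟨x, hx, hxe⟩ := (hwin M).1 hw
    exact (hwin M').2 ⟨x, hsub hx, hsub hxe⟩
  exact maker_strategy hmono ∅ h1 h2 h3 (by omega) (by omega) (by omega)
    (fun M' hu hv => (hwin M').2 ⟨m, hu, hv⟩)
    (fun M' hv hw => (hwin M').2 ⟨m + e, hv, hw⟩)

lemma breaker_board {win : Finset ℕ → Prop} {e : ℕ} (he : 0 < e)
    (hwin : ∀ M, win M ↔ ∃ m, m ∈ M ∧ m + e ∈ M) {S : Finset ℕ}
    (hS : ¬ ∃ m, m ∈ S ∧ m + e ∈ S ∧ m + e + e ∈ S) : BreakerWins win S :=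
  breaker_strategy e he win hwin S.card S ∅ (le_refl _) hS (by simp) (by simp)

end Aux


/-- Theorem 1.2(iii)(b) of the paper. For the equation `a x₁ - a x₂ = b`
(with `a ≠ 0`) which has a solution in two distinct positive integers, the `(A,b)`-game on
`[n]_p` is Maker's win w.h.p. if `p·n^{1/3} → ∞` and Breaker's win w.h.p. if
`p·n^{1/3} → 0`. -/
theorem difference_equation_threshold (a : ℤ) (ha : a ≠ 0) (b : ℤ)
    (hAb : ∃ x y : ℕ, 0 < x ∧ 0 < y ∧ x ≠ y ∧ a * (x : ℤ) - a * (y : ℤ) = b)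
    (p : ℕ → ℝ) (hp : ∀ n, 0 ≤ p n ∧ p n ≤ 1) :
    (Filter.Tendsto (fun n : ℕ => p n * (n : ℝ) ^ ((1 : ℝ) / 3)) Filter.atTop Filter.atTop →
      Filter.Tendsto
        (fun n => probRandomSubset n (p n) (fun S =>
          MakerWinsRado (Matrix.of fun _ : Fin 1 => ![a, -a]) (fun _ => b) S))
        Filter.atTop (nhds 1)) ∧
    (Filter.Tendsto (fun n : ℕ => p n * (n : ℝ) ^ ((1 : ℝ) / 3)) Filter.atTop (nhds 0) →
      Filter.Tendsto
        (fun n => probRandomSubset n (p n) (fun S =>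
          BreakerWinsRado (Matrix.of fun _ : Fin 1 => ![a, -a]) (fun _ => b) S))
        Filter.atTop (nhds 1)) := by
  classical
  obtain ⟨x0, y0, hx0, hy0, hxy, hab⟩ := hAb
  set d : ℤ := (x0 : ℤ) - (y0 : ℤ) with hd
  have hdne : d ≠ 0 := by
    rw [hd, sub_ne_zero]
    intro h
    exact hxy (by exact_mod_cast h)
  have hbd : b = a * d := by rw [hd]; linarith [hab]
  set e : ℕ := d.natAbs with hedef
  have he : 0 < e := Int.natAbs_pos.2 hdne
  have hwin : ∀ M : Finset ℕ,
      RadoWin (Matrix.of fun _ : Fin 1 => ![a, -a]) (fun _ => b) M ↔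
        ∃ m, m ∈ M ∧ m + e ∈ M := by
    intro M
    have : (fun _ : Fin 1 => b) = (fun _ : Fin 1 => a * d) := funext fun _ => hbd
    rw [this]
    exact radoWin_iff_aux a ha d hdne M
  have h3e : (0:ℝ) < 3 * e := by positivity
  have hcube : ∀ n : ℕ, (p n * (n:ℝ) ^ ((1:ℝ)/3)) ^ 3 = (p n)^3 * n := by
    intro n
    rw [mul_pow]
    congr 1
    rw [← Real.rpow_natCast ((n:ℝ) ^ ((1:ℝ)/3)) 3, ← Real.rpow_mul (Nat.cast_nonneg n)]
    norm_num
  have hub : ∀ (P : Finset ℕ → Prop) (n : ℕ), probRandomSubset n (p n) P ≤ 1 := by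
    intro P n
    obtain ⟨hp0, hp1⟩ := hp n
    rw [prob_eq_PSaux]
    exact PSaux_le_one hp0 hp1 _ _
  constructor
  · -- Maker's win
    intro hinf
    set T : ℕ → Finset ℕ :=
      fun j => {3*(e*j) + 1, 3*(e*j) + 1 + e, 3*(e*j) + 1 + e + e} with hT
    have hTcard : ∀ j, (T j).card = 3 := by
      intro j
      rw [hT]
      rw [Finset.card_insert_of_notMem (by simp; omega),
          Finset.card_insert_of_notMem (by simp; omega), Finset.card_singleton]
    set N : ℕ → ℕ := fun n => n / (3*e) with hN
    have hTsub : ∀ n : ℕ, ∀ j ∈ Finset.range (N n), T j ⊆ Finset.Icc 1 n := by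
      intro n j hj
      rw [Finset.mem_range] at hj
      have h1 : e*j + e ≤ e * (N n) := by
        have h := Nat.mul_le_mul_left e (Nat.succ_le_of_lt hj)
        calc e*j + e = e * (j+1) := by ring
          _ ≤ e * N n := h
      have h2 : 3 * (e * N n) ≤ n := by
        have h := Nat.div_mul_le_self n (3*e)
        calc 3 * (e * N n) = (n / (3*e)) * (3*e) := by rw [hN]; ring
          _ ≤ n := h
      intro x hx
      rw [hT] at hx
      simp only [Finset.mem_insert, Finset.mem_singleton] at hx
      rw [Finset.mem_Icc]
      omega
    have hTdisj : ∀ n : ℕ, ∀ i ∈ Finset.range (N n), ∀ j ∈ Finset.range (N n), i ≠ j →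
        Disjoint (T i) (T j) := by
      intro n i _ j _ hij
      rw [Finset.disjoint_left]
      intro x hxi hxj
      rw [hT] at hxi hxj
      simp only [Finset.mem_insert, Finset.mem_singleton] at hxi hxj
      rcases Nat.lt_or_ge i j with h | h
      · have hkey : e * i + e ≤ e * j := by
          have h' := Nat.mul_le_mul_left e (Nat.succ_le_of_lt h)
          calc e*i + e = e * (i+1) := by ring
            _ ≤ e * j := h'
        omega
      · have hji : j < i := by omega
        have hkey : e * j + e ≤ e * i := by
          have h' := Nat.mul_le_mul_left e (Nat.succ_le_of_lt hji)
          calc e*j + e = e * (j+1) := by ring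
            _ ≤ e * i := h'
        omega
    have hlb : ∀ n : ℕ, 1 - (1 - (p n)^3) ^ (N n) ≤
        probRandomSubset n (p n) (fun S =>
          MakerWinsRado (Matrix.of fun _ : Fin 1 => ![a, -a]) (fun _ => b) S) := by
      intro n
      obtain ⟨hp0, hp1⟩ := hp n
      rw [prob_eq_PSaux]
      have hblocks := PSaux_blocks (p n) T (Finset.range (N n)) (Finset.Icc 1 n)
        (hTsub n) (hTdisj n)
      have hprod : ∏ j ∈ Finset.range (N n), (1 - (p n) ^ (T j).card)
          = (1 - (p n)^3) ^ (N n) := by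
        rw [Finset.prod_congr rfl (fun j _ => by rw [hTcard j]), Finset.prod_const,
          Finset.card_range]
      rw [hprod] at hblocks
      have hcompl := PSaux_compl (p n) (Finset.Icc 1 n)
        (fun S => ∀ j ∈ Finset.range (N n), ¬ T j ⊆ S)
      have hmono : PSaux (p n) (Finset.Icc 1 n)
            (fun S => ¬ ∀ j ∈ Finset.range (N n), ¬ T j ⊆ S)
          ≤ PSaux (p n) (Finset.Icc 1 n) (fun S =>
            MakerWinsRado (Matrix.of fun _ : Fin 1 => ![a, -a]) (fun _ => b) S) := by
        refine PSaux_mono hp0 hp1 _ fun S _ hnot => ?_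
        push_neg at hnot
        obtain ⟨j, _, hsubj⟩ := hnot
        have hm1 : 3*(e*j) + 1 ∈ S := hsubj (by rw [hT]; simp)
        have hm2 : 3*(e*j) + 1 + e ∈ S := hsubj (by rw [hT]; simp)
        have hm3 : 3*(e*j) + 1 + e + e ∈ S := hsubj (by rw [hT]; simp)
        exact maker_board he hwin ⟨3*(e*j) + 1, hm1, hm2, hm3⟩
      linarith
    have hNlim : Filter.Tendsto (fun n : ℕ => (p n)^3 * (N n : ℝ))
        Filter.atTop Filter.atTop := by
      refine Filter.tendsto_atTop_mono ?_ ?_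
        (f := fun n : ℕ => (p n * (n:ℝ)^((1:ℝ)/3))^3 / (3*e) - 1)
      · intro n
        obtain ⟨hp0, hp1⟩ := hp n
        have hp3 : 0 ≤ (p n)^3 := pow_nonneg hp0 3
        have hp3le : (p n)^3 ≤ 1 := pow_le_one₀ hp0 hp1
        have hmodn : n < 3*e*(N n) + 3*e := by
          have h1 := Nat.div_add_mod n (3*e)
          have h2 := Nat.mod_lt n (show 0 < 3*e by omega)
          have h3 : 3*e*(N n) + n % (3*e) = n := by rw [hN]; exact h1
          linarith
        have hmodr : (n:ℝ) < 3*(e:ℝ)*(N n) + 3*e := by exact_mod_cast hmodn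
        rw [hcube n, sub_le_iff_le_add, div_le_iff₀ h3e]
        nlinarith [mul_le_mul_of_nonneg_left hmodr.le hp3,
          mul_le_mul_of_nonneg_left hp3le (le_of_lt h3e)]
      · have h1 : Filter.Tendsto (fun n : ℕ => (p n * (n:ℝ)^((1:ℝ)/3))^3)
            Filter.atTop Filter.atTop :=
          (Filter.tendsto_pow_atTop (three_ne_zero)).comp hinf
        have h2 := h1.atTop_div_const h3e
        have h3 := Filter.tendsto_atTop_add_const_right Filter.atTop (-1 : ℝ) h2
        simpa [sub_eq_add_neg] using h3
    have hexp : Filter.Tendsto (fun n : ℕ => Real.exp (-((p n)^3 * (N n : ℝ))))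
        Filter.atTop (nhds 0) :=
      Real.tendsto_exp_atBot.comp (Filter.tendsto_neg_atTop_atBot.comp hNlim)
    have hpow0 : Filter.Tendsto (fun n : ℕ => (1 - (p n)^3) ^ (N n))
        Filter.atTop (nhds 0) := by
      refine tendsto_of_tendsto_of_tendsto_of_le_of_le tendsto_const_nhds hexp ?_ ?_
      · intro n
        obtain ⟨hp0, hp1⟩ := hp n
        have hp3le : (p n)^3 ≤ 1 := pow_le_one₀ hp0 hp1
        exact pow_nonneg (by linarith) _
      · intro n
        obtain ⟨hp0, hp1⟩ := hp n
        have hp3le : (p n)^3 ≤ 1 := pow_le_one₀ hp0 hp1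
        have hle : (1 - (p n)^3) ≤ Real.exp (-((p n)^3)) := by
          have := Real.add_one_le_exp (-((p n)^3))
          linarith
        calc (1 - (p n)^3) ^ (N n) ≤ (Real.exp (-((p n)^3))) ^ (N n) :=
              pow_le_pow_left₀ (by linarith) hle _
          _ = Real.exp (-((p n)^3 * (N n : ℝ))) := by
              rw [← Real.exp_nat_mul]
              congr 1
              ring
    have hlim : Filter.Tendsto (fun n : ℕ => 1 - (1 - (p n)^3) ^ (N n))
        Filter.atTop (nhds 1) := by
      have := hpow0.const_sub 1
      simpa using this
    exact tendsto_of_tendsto_of_tendsto_of_le_of_le hlim tendsto_const_nhds hlb (hub _)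
  · -- Breaker's win
    intro h0
    have hlb : ∀ n : ℕ, 1 - (p n * (n:ℝ)^((1:ℝ)/3))^3 ≤
        probRandomSubset n (p n) (fun S =>
          BreakerWinsRado (Matrix.of fun _ : Fin 1 => ![a, -a]) (fun _ => b) S) := by
      intro n
      obtain ⟨hp0, hp1⟩ := hp n
      rw [prob_eq_PSaux, hcube n]
      have hp3 : 0 ≤ (p n)^3 := pow_nonneg hp0 3
      set J : Finset ℕ := (Finset.Icc 1 n).filter (fun m => m + e + e ≤ n) with hJ
      have hub2 : PSaux (p n) (Finset.Icc 1 n)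
            (fun S => ∃ m, m ∈ S ∧ m+e ∈ S ∧ m+e+e ∈ S)
          ≤ ∑ m ∈ J, PSaux (p n) (Finset.Icc 1 n)
              (fun S => ({m, m+e, m+e+e} : Finset ℕ) ⊆ S) := by
        refine PSaux_union_bound hp0 hp1 _ J _ fun S hS hex => ?_
        obtain ⟨m, h1, h2, h3⟩ := hex
        have hm1 := hS h1
        have hm3 := hS h3
        rw [Finset.mem_Icc] at hm1 hm3
        refine ⟨m, ?_, ?_⟩
        · rw [hJ, Finset.mem_filter, Finset.mem_Icc]
          exact ⟨⟨hm1.1, hm1.2⟩, hm3.2⟩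
        · intro x hx
          simp only [Finset.mem_insert, Finset.mem_singleton] at hx
          rcases hx with rfl | rfl | rfl
          exacts [h1, h2, h3]
      have heach : ∀ m ∈ J, PSaux (p n) (Finset.Icc 1 n)
          (fun S => ({m, m+e, m+e+e} : Finset ℕ) ⊆ S) = (p n)^3 := by
        intro m hm
        rw [hJ, Finset.mem_filter, Finset.mem_Icc] at hm
        have hsub : ({m, m+e, m+e+e} : Finset ℕ) ⊆ Finset.Icc 1 n := by
          intro x hx
          simp only [Finset.mem_insert, Finset.mem_singleton] at hx
          rw [Finset.mem_Icc]
          omega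
        have hcard3 : ({m, m+e, m+e+e} : Finset ℕ).card = 3 := by
          rw [Finset.card_insert_of_notMem (by simp; omega),
            Finset.card_insert_of_notMem (by simp; omega), Finset.card_singleton]
        rw [PSaux_subset_event (p n) hsub, hcard3]
      have hsum : ∑ m ∈ J, PSaux (p n) (Finset.Icc 1 n)
          (fun S => ({m, m+e, m+e+e} : Finset ℕ) ⊆ S) = (J.card : ℝ) * (p n)^3 := by
        rw [Finset.sum_congr rfl heach, Finset.sum_const, nsmul_eq_mul]
      have hJcard : (J.card : ℝ) ≤ (n : ℝ) := by
        have h1 := Finset.card_filter_le (Finset.Icc 1 n) (fun m => m + e + e ≤ n)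
        have h2 : (Finset.Icc 1 n).card = n := by rw [Nat.card_Icc]; omega
        exact_mod_cast h2 ▸ h1
      have hcompl := PSaux_compl (p n) (Finset.Icc 1 n)
        (fun S => ∃ m, m ∈ S ∧ m+e ∈ S ∧ m+e+e ∈ S)
      have hmono : PSaux (p n) (Finset.Icc 1 n)
            (fun S => ¬ ∃ m, m ∈ S ∧ m+e ∈ S ∧ m+e+e ∈ S)
          ≤ PSaux (p n) (Finset.Icc 1 n) (fun S =>
            BreakerWinsRado (Matrix.of fun _ : Fin 1 => ![a, -a]) (fun _ => b) S) :=
        PSaux_mono hp0 hp1 _ fun S _ hno => breaker_board he hwin hno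
      have hJp : (J.card : ℝ) * (p n)^3 ≤ (p n)^3 * n := by
        rw [mul_comm]
        exact mul_le_mul_of_nonneg_left hJcard hp3
      linarith
    have hlim : Filter.Tendsto (fun n : ℕ => 1 - (p n * (n:ℝ)^((1:ℝ)/3))^3)
        Filter.atTop (nhds 1) := by
      have h3 : Filter.Tendsto (fun n : ℕ => (p n * (n:ℝ)^((1:ℝ)/3))^3)
          Filter.atTop (nhds 0) := by
        have := h0.pow 3
        simpa using this
      have := h3.const_sub 1
      simpa using this
    exact tendsto_of_tendsto_of_tendsto_of_le_of_le hlim tendsto_const_nhds hlb (hub _)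
end

section
/- Let α, β be distinct positive integers and b an integer such that αx − βy = b has a solution in two distinct positive integers, and let A be the 1×2 matrix (α −β). If p = p(n) satisfies p·n^{1/3} → ∞, then with high probability Maker wins the (A,b)-game on [n]_p. -/
variable {V : Type*} [DecidableEq V]

/-! Maker wins as soon as the board contains a cherry: two solutions `(v, u)` and `(w, v)` of
`α x - β y = b` sharing the entry `v`. She claims `v` and then completes whichever of the two
solutions Breaker has not blocked. Translating a single cherry produces `⌊n / K⌋` pairwise
disjoint cherries in `[n]`, for a constant `K`. Each lies in `[n]_p` with probability `p ^ 3`,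
independently, so none does with probability at most
`(1 - p ^ 3) ^ ⌊n / K⌋ ≤ exp (-p ^ 3 ⌊n / K⌋)`, which tends to `0` because `p ^ 3 n → ∞`. -/

open Finset Filter Function Topology

theorem makerWinsAux_of_win {win : Finset V → Prop} (hwin : Monotone win) :
    ∀ (R : Finset V) (t : Bool) (M : Finset V), win M → makerWinsAux win t R M := by
  intro R
  induction R using Finset.strongInduction with
  | _ R ih =>
    intro t M hM
    cases t <;> rw [makerWinsAux] <;> split_ifs with hR
    · exact fun x hx => ih _ (erase_ssubset hx) true M hM
    · exact hM
    · obtain ⟨x, hx⟩ := hR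
      exact ⟨x, hx, ih _ (erase_ssubset hx) false _ (hwin (subset_insert x M) hM)⟩
    · exact hM

theorem makerWins_of_cherry {win : Finset V → Prop} (hwin : Monotone win) {X : Finset V}
    {v u w : V} (hv : v ∈ X) (hu : u ∈ X) (hw : w ∈ X) (hvu : v ≠ u) (hvw : v ≠ w)
    (huw : u ≠ w) (hvu_win : win {u, v}) (hvw_win : win {w, v}) : MakerWins win X := by
  have complete :
      ∀ {R : Finset V} {y : V}, y ∈ R → win {y, v} → makerWinsAux win true R {v} :=
    fun {R y} hy hwin_y => by
      rw [makerWinsAux, if_pos ⟨y, hy⟩]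
      exact ⟨y, hy, makerWinsAux_of_win hwin _ _ _ hwin_y⟩
  have hu₁ : u ∈ X.erase v := mem_erase.2 ⟨hvu.symm, hu⟩
  have hw₁ : w ∈ X.erase v := mem_erase.2 ⟨hvw.symm, hw⟩
  rw [MakerWins, makerWinsAux, if_pos ⟨v, hv⟩]
  refine ⟨v, hv, ?_⟩
  rw [makerWinsAux, if_pos ⟨u, hu₁⟩]
  intro x _
  by_cases hxu : x = u
  · exact complete (mem_erase.2 ⟨hxu ▸ huw.symm, hw₁⟩) hvw_win
  · exact complete (mem_erase.2 ⟨Ne.symm hxu, hu₁⟩) hvu_win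

section RandomSubset

variable {α : Type*}

open Classical in
noncomputable def subsetProb (U : Finset α) (p : ℝ) (P : Finset α → Prop) : ℝ :=
  ∑ S ∈ U.powerset, if P S then p ^ #S * (1 - p) ^ (#U - #S) else 0

theorem probRandomSubset_eq_subsetProb (n : ℕ) (p : ℝ) (P : Finset ℕ → Prop) :
    probRandomSubset n p P = subsetProb (Icc 1 n) p P := by
  simp [probRandomSubset, subsetProb]

open Classical in
theorem subsetProb_congr {U : Finset α} {p : ℝ} {P Q : Finset α → Prop}
    (h : ∀ S ⊆ U, P S ↔ Q S) : subsetProb U p P = subsetProb U p Q :=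
  sum_congr rfl fun S hS => if_congr (h S (mem_powerset.1 hS)) rfl rfl

theorem subsetProb_true (U : Finset α) (p : ℝ) : subsetProb U p (fun _ => True) = 1 := by
  simp only [subsetProb, if_true, sum_pow_mul_eq_add_pow, add_sub_cancel, one_pow]

theorem subsetProb_not (U : Finset α) (p : ℝ) (P : Finset α → Prop) :
    subsetProb U p (fun S => ¬ P S) = 1 - subsetProb U p P := by
  rw [← subsetProb_true U p, eq_sub_iff_add_eq, subsetProb, subsetProb, subsetProb,
    ← sum_add_distrib]
  refine sum_congr rfl fun S _ => ?_
  by_cases h : P S <;> simp [h]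

theorem subsetProb_mono {U : Finset α} {p : ℝ} (hp₀ : 0 ≤ p) (hp₁ : p ≤ 1)
    {P Q : Finset α → Prop} (h : ∀ S, P S → Q S) :
    subsetProb U p P ≤ subsetProb U p Q := by
  refine sum_le_sum fun S _ => ?_
  by_cases hP : P S
  · rw [if_pos hP, if_pos (h S hP)]
  · rw [if_neg hP]
    split_ifs
    · exact mul_nonneg (pow_nonneg hp₀ _) (pow_nonneg (sub_nonneg.2 hp₁) _)
    · exact le_rfl

theorem subsetProb_superset_self (U : Finset α) (p : ℝ) :
    subsetProb U p (fun S => U ⊆ S) = p ^ #U := by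
  rw [subsetProb_congr (Q := fun S => S = U) fun S hS => ⟨hS.antisymm, fun h => h.ge⟩]
  rw [subsetProb, sum_eq_single_of_mem U (mem_powerset_self U) fun S _ hS => if_neg hS]
  simp

variable [DecidableEq α]

theorem subsetProb_union {A B : Finset α} (hAB : Disjoint A B) (p : ℝ)
    (P Q : Finset α → Prop) :
    subsetProb (A ∪ B) p (fun S => P (S ∩ A) ∧ Q (S ∩ B)) =
      subsetProb A p P * subsetProb B p Q := by
  rw [subsetProb, subsetProb, subsetProb, sum_mul_sum, ← sum_product']
  refine sum_nbij' (fun S => (S ∩ A, S ∩ B)) (fun x => x.1 ∪ x.2) ?_ ?_ ?_ ?_ ?_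
  · intro S hS
    simp only [mem_powerset, mem_product] at hS ⊢
    exact ⟨inter_subset_right, inter_subset_right⟩
  · intro x hx
    simp only [mem_powerset, mem_product] at hx ⊢
    exact union_subset_union hx.1 hx.2
  · intro S hS
    rw [mem_powerset] at hS
    rw [← inter_union_distrib_left, inter_eq_left.2 hS]
  · rintro ⟨S, R⟩ hx
    simp only [mem_powerset, mem_product] at hx
    dsimp only
    rw [union_inter_distrib_right, union_inter_distrib_right, inter_eq_left.2 hx.1,
      inter_eq_left.2 hx.2, disjoint_iff_inter_eq_empty.1 (hAB.symm.mono_left hx.2),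
      disjoint_iff_inter_eq_empty.1 (hAB.mono_left hx.1)]
    simp
  · intro S hS
    rw [mem_powerset] at hS
    have hcard : #S = #(S ∩ A) + #(S ∩ B) := by
      rw [← card_union_of_disjoint (hAB.mono inter_subset_right inter_subset_right),
        ← inter_union_distrib_left, inter_eq_left.2 hS]
    have hA : #(S ∩ A) ≤ #A := card_le_card inter_subset_right
    have hB : #(S ∩ B) ≤ #B := card_le_card inter_subset_right
    rw [card_union_of_disjoint hAB, hcard,
      show #A + #B - (#(S ∩ A) + #(S ∩ B)) = (#A - #(S ∩ A)) + (#B - #(S ∩ B)) by omega]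
    by_cases hP : P (S ∩ A) <;> by_cases hQ : Q (S ∩ B) <;> simp [hP, hQ, pow_add]
    ring

theorem subsetProb_forall_not_subset {C : ℕ → Finset α} (hC : Pairwise (Disjoint on C))
    (p : ℝ) {T : ℕ} {U : Finset α} (hCU : ∀ t < T, C t ⊆ U) :
    subsetProb U p (fun S => ∀ t < T, ¬ C t ⊆ S) = ∏ t ∈ range T, (1 - p ^ #(C t)) := by
  induction T generalizing U with
  | zero => simpa using subsetProb_true U p
  | succ T ih =>
    have hCT : C T ⊆ U := hCU T T.lt_add_one
    have hCA : ∀ t < T, C t ⊆ U \ C T := fun t ht =>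
      subset_sdiff.2 ⟨hCU t (by omega), hC ht.ne⟩
    calc subsetProb U p (fun S => ∀ t < T + 1, ¬ C t ⊆ S)
        = subsetProb (U \ C T ∪ C T) p
            (fun S => (∀ t < T, ¬ C t ⊆ S ∩ (U \ C T)) ∧ ¬ C T ⊆ S ∩ C T) := by
          rw [sdiff_union_of_subset hCT]
          refine subsetProb_congr fun S _ => ?_
          simp only [Nat.forall_lt_succ_right, subset_inter_iff, subset_refl, and_true]
          exact and_congr_left' (forall₂_congr fun t ht => by rw [and_iff_left (hCA t ht)])
      _ = (∏ t ∈ range T, (1 - p ^ #(C t))) * (1 - p ^ #(C T)) := by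
          rw [subsetProb_union sdiff_disjoint p (fun S => ∀ t < T, ¬ C t ⊆ S) (¬ C T ⊆ ·),
            ih hCA, subsetProb_not, subsetProb_superset_self]
      _ = ∏ t ∈ range (T + 1), (1 - p ^ #(C t)) := (prod_range_succ _ _).symm

end RandomSubset

theorem probRandomSubset_le_one {n : ℕ} {p : ℝ} (hp₀ : 0 ≤ p) (hp₁ : p ≤ 1)
    (P : Finset ℕ → Prop) : probRandomSubset n p P ≤ 1 := by
  rw [probRandomSubset_eq_subsetProb, ← subsetProb_true (Icc 1 n) p]
  exact subsetProb_mono hp₀ hp₁ fun _ _ => trivial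

theorem one_sub_pow_le_probRandomSubset {n k T : ℕ} {p : ℝ} (hp₀ : 0 ≤ p) (hp₁ : p ≤ 1)
    {C : ℕ → Finset ℕ} (hC : Pairwise (Disjoint on C)) (hCn : ∀ t < T, C t ⊆ Icc 1 n)
    (hCk : ∀ t, #(C t) = k) {P : Finset ℕ → Prop} (hP : ∀ S, ∀ t < T, C t ⊆ S → P S) :
    1 - (1 - p ^ k) ^ T ≤ probRandomSubset n p P := by
  rw [probRandomSubset_eq_subsetProb]
  calc 1 - (1 - p ^ k) ^ T = subsetProb (Icc 1 n) p (fun S => ¬ ∀ t < T, ¬ C t ⊆ S) := by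
        rw [subsetProb_not, subsetProb_forall_not_subset hC p hCn]
        simp [hCk]
    _ ≤ subsetProb (Icc 1 n) p P := subsetProb_mono hp₀ hp₁ fun S hS =>
        Classical.byContradiction fun hPS => hS fun t ht hCS => hPS (hP S t ht hCS)

theorem tendsto_one_sub_pow_nhds_zero {ι : Type*} {l : Filter ι} {q : ι → ℝ} {T : ι → ℕ}
    (hq : ∀ i, q i ≤ 1) (hqT : Tendsto (fun i => q i * T i) l atTop) :
    Tendsto (fun i => (1 - q i) ^ T i) l (𝓝 0) := by
  refine squeeze_zero (fun i => pow_nonneg (sub_nonneg.2 (hq i)) _) (fun i => ?_)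
    (Real.tendsto_exp_atBot.comp (tendsto_neg_atTop_atBot.comp hqT))
  calc (1 - q i) ^ T i ≤ Real.exp (-q i) ^ T i :=
        pow_le_pow_left₀ (sub_nonneg.2 (hq i)) (Real.one_sub_le_exp_neg _) _
    _ = Real.exp (-(q i * T i)) := by rw [← Real.exp_nat_mul]; ring_nf

theorem tendsto_mul_natCast_div_atTop {q : ℕ → ℝ} (hq₀ : ∀ n, 0 ≤ q n)
    (hq₁ : ∀ n, q n ≤ 1) {K : ℕ} (hK : 0 < K) (hq : Tendsto (fun n => q n * n) atTop atTop) :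
    Tendsto (fun n => q n * (n / K : ℕ)) atTop atTop := by
  have hK' : (0 : ℝ) < K := by exact_mod_cast hK
  refine tendsto_atTop_mono (fun n => ?_)
    (tendsto_atTop_add_const_right _ (-1) (hq.atTop_div_const hK'))
  have hdiv : (n : ℝ) < K * ((n / K : ℕ) + 1) := by exact_mod_cast Nat.lt_mul_div_succ n hK
  have : q n * n / K ≤ q n * (n / K : ℕ) + q n := by
    rw [div_le_iff₀ hK']
    nlinarith [hq₀ n]
  linarith [hq₁ n]


theorem radoWin_monotone {l k : ℕ} (A : Matrix (Fin l) (Fin k) ℤ) (b : Fin l → ℤ) :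
    Monotone (RadoWin A b) :=
  fun _ _ hMN ⟨x, hx, hxM, hAx⟩ => ⟨x, hx, fun i => hMN (hxM i), hAx⟩

theorem radoWin_pair {α β b : ℤ} {x y : ℕ} (hxy : x ≠ y) (h : α * x - β * y = b) :
    RadoWin (Matrix.of fun _ : Fin 1 => ![α, -β]) (fun _ => b) {x, y} := by
  refine ⟨![x, y], ?_, fun i => by fin_cases i <;> simp, funext fun _ => ?_⟩
  · intro i j hij
    fin_cases i <;> fin_cases j <;> simp_all [eq_comm]
  · simp [Matrix.mulVec, dotProduct, Fin.sum_univ_two, ← h, sub_eq_add_neg]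

def IsCherry (α β b v u w : ℤ) : Prop :=
  α * v - β * u = b ∧ α * w - β * v = b

theorem IsCherry.shift {α β b v u w : ℤ} (h : IsCherry α β b v u w) (k : ℤ) :
    IsCherry α β b (v + α * β * k) (u + α * α * k) (w + β * β * k) :=
  ⟨by linear_combination h.1, by linear_combination h.2⟩

theorem IsCherry.pairwise_ne {α β b v u w : ℤ} (h : IsCherry α β b v u w) (hα : 0 < α)
    (hβ : 0 < β) (hαβ : α ≠ β) (hv : |b| < v) : v ≠ u ∧ v ≠ w ∧ u ≠ w := by
  have hb : (α - β) * v ≠ b := fun hb => by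
    have : |v| ≤ |b| := by
      rw [← hb, abs_mul]
      exact le_mul_of_one_le_left (abs_nonneg v) (Int.one_le_abs (sub_ne_zero.2 hαβ))
    linarith [le_abs_self v]
  have hvu : v ≠ u := fun hvu => hb (by rw [← h.1, ← hvu]; ring)
  refine ⟨hvu, fun hvw => hb (by rw [← h.2, ← hvw]; ring), fun huw => hvu ?_⟩
  have : (α + β) * (v - u) = 0 := by linear_combination h.1 - h.2 - α * huw
  exact sub_eq_zero.1 ((mul_eq_zero.1 this).resolve_left (by omega))

/-- The cherry is found by the Chinese remainder theorem: with `α = a g`, `β = c g` and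
`s a + t c = 1`, the entry `v` must be `≡ x (mod c)` and `≡ y (mod a)`. -/
theorem exists_isCherry (α β x y : ℤ) : ∃ v u w, IsCherry α β (α * x - β * y) v u w := by
  rcases (Int.gcd α β).eq_zero_or_pos with hg | hg
  · obtain ⟨rfl, rfl⟩ := Int.gcd_eq_zero_iff.1 hg
    exact ⟨0, 0, 0, by simp [IsCherry]⟩
  obtain ⟨g, a, c, -, hac, rfl, rfl⟩ := Int.exists_gcd_one' hg
  obtain ⟨s, t, hst⟩ := Int.isCoprime_iff_gcd_eq_one.2 hac
  exact ⟨x + c * (y - x) * t, y + a * (y - x) * t, x - c * (y - x) * s,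
    by ring, by linear_combination (-(g * c * (y - x))) * hst⟩

theorem exists_natCast_isCherry {α β b x y : ℤ} (hα : 0 < α) (hβ : 0 < β)
    (hxy : α * x - β * y = b) :
    ∃ v u w : ℕ, |b| < v ∧ 0 < u ∧ 0 < w ∧ IsCherry α β b v u w := by
  obtain ⟨v, u, w, hc⟩ := exists_isCherry α β x y
  rw [hxy] at hc
  set k := |v| + |u| + |w| + |b| + 1
  have hk : ∀ γ δ : ℤ, 0 < γ → 0 < δ → k ≤ γ * δ * k := fun γ δ hγ hδ =>
    le_mul_of_one_le_left (by positivity) (by have := mul_pos hγ hδ; omega)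
  have hb₀ := abs_nonneg b
  have hv : |b| < v + α * β * k := by
    linarith [neg_abs_le v, hk α β hα hβ, abs_nonneg u, abs_nonneg w]
  have hu : 0 < u + α * α * k := by
    linarith [neg_abs_le u, hk α α hα hα, abs_nonneg v, abs_nonneg w]
  have hw : 0 < w + β * β * k := by
    linarith [neg_abs_le w, hk β β hβ hβ, abs_nonneg u, abs_nonneg v]
  obtain ⟨v', hv'⟩ := Int.eq_ofNat_of_zero_le ((abs_nonneg b).trans hv.le)
  obtain ⟨u', hu'⟩ := Int.eq_ofNat_of_zero_le hu.le
  obtain ⟨w', hw'⟩ := Int.eq_ofNat_of_zero_le hw.le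
  refine ⟨v', u', w', hv' ▸ hv, by omega, by omega, ?_⟩
  rw [← hv', ← hu', ← hw']
  exact hc.shift k

theorem makerWinsRado_of_isCherry {α β b : ℤ} {v u w : ℕ} (h : IsCherry α β b v u w)
    (hvu : v ≠ u) (hvw : v ≠ w) (huw : u ≠ w) {X : Finset ℕ} (hv : v ∈ X) (hu : u ∈ X)
    (hw : w ∈ X) : MakerWinsRado (Matrix.of fun _ : Fin 1 => ![α, -β]) (fun _ => b) X :=
  makerWins_of_cherry (radoWin_monotone _ _) hv hu hw hvu hvw huw
    (pair_comm v u ▸ radoWin_pair hvu h.1) (radoWin_pair hvw.symm h.2)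


theorem injective_add_mul_mul {ι : Type*} {r c : ι → ℕ} {m : ℕ} (hr : Injective r)
    (hrm : ∀ i, r i < m) (hc : ∀ i, c i ≠ 0) :
    Injective fun x : ι × ℕ => r x.1 + c x.1 * (m * x.2) := by
  have hmod : ∀ i s, (r i + c i * (m * s)) % m = r i := fun i s => by
    rw [mul_left_comm, Nat.add_mul_mod_self_left, Nat.mod_eq_of_lt (hrm i)]
  rintro ⟨i, s⟩ ⟨j, t⟩ h
  obtain rfl : i = j := hr (by simpa only [hmod] using congrArg (· % m) h)
  have hm : m ≠ 0 := (Nat.zero_le _).trans_lt (hrm i) |>.ne'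
  simp_all

theorem pairwise_disjoint_image_slice {ι κ γ : Type*} [Fintype ι] [DecidableEq γ]
    {f : ι × κ → γ} (hf : Injective f) :
    Pairwise (Disjoint on fun t => univ.image fun i => f (i, t)) := by
  intro s t hst
  rw [onFun, disjoint_left]
  simp only [mem_image, mem_univ, true_and]
  rintro _ ⟨i, rfl⟩ ⟨j, hj⟩
  exact hst (congrArg Prod.snd (hf hj)).symm

theorem add_mul_mul_mem_Icc {r c m t n K : ℕ} (hr : 0 < r) (hrm : r < m)
    (hK : m * (1 + c) ≤ K) (ht : t < n / K) : r + c * (m * t) ∈ Icc 1 n := by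
  refine mem_Icc.2 ⟨by omega, ?_⟩
  calc r + c * (m * t) ≤ m * (1 + c) * (t + 1) := by nlinarith
    _ ≤ K * (n / K) := Nat.mul_le_mul hK ht
    _ ≤ n := Nat.mul_div_le n K

/-- The translates of one cherry by `m t (α β, α², β²)` are cherries; they are pairwise
disjoint because `m` exceeds the entries of the original one, so residues mod `m` tell them
apart. -/
theorem exists_disjoint_cherries {α β : ℕ} (hα : 0 < α) (hβ : 0 < β) (hαβ : α ≠ β)
    {b x y : ℤ} (hxy : α * x - β * y = b) :
    ∃ K > 0, ∃ C : ℕ → Finset ℕ, Pairwise (Disjoint on C) ∧ (∀ t, #(C t) = 3) ∧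
      (∀ n, ∀ t < n / K, C t ⊆ Icc 1 n) ∧
      ∀ t S, C t ⊆ S →
        MakerWinsRado (Matrix.of fun _ : Fin 1 => ![(α : ℤ), -β]) (fun _ => b) S := by
  obtain ⟨v, u, w, hv, hu, hw, hc⟩ :=
    exists_natCast_isCherry (by exact_mod_cast hα) (by exact_mod_cast hβ) hxy
  obtain ⟨hvu, hvw, huw⟩ := hc.pairwise_ne (by exact_mod_cast hα) (by exact_mod_cast hβ)
    (by exact_mod_cast hαβ) hv
  simp only [ne_eq, Nat.cast_inj] at hvu hvw huw
  have hv₀ : 0 < v := by exact_mod_cast (abs_nonneg b).trans_lt hv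
  set m := v + u + w
  set r : Fin 3 → ℕ := ![v, u, w]
  set c : Fin 3 → ℕ := ![α * β, α * α, β * β]
  set f : Fin 3 × ℕ → ℕ := fun x => r x.1 + c x.1 * (m * x.2)
  have hr₀ : ∀ i, 0 < r i := fun i => by fin_cases i <;> simp [r] <;> omega
  have hrm : ∀ i, r i < m := fun i => by fin_cases i <;> simp [r] <;> omega
  have hf : Injective f := by
    refine injective_add_mul_mul (fun i j hij => ?_) hrm fun i => ?_
    · fin_cases i <;> fin_cases j <;> simp_all [r, eq_comm]
    · fin_cases i <;> simp [c, hα.ne', hβ.ne']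
  refine ⟨m * (1 + ∑ i, c i), by positivity, fun t => univ.image fun i => f (i, t),
    ?_, ?_, ?_, ?_⟩
  · exact pairwise_disjoint_image_slice hf
  · intro t
    rw [card_image_of_injective _ fun i j h => congrArg Prod.fst (hf h), card_univ,
      Fintype.card_fin]
  · intro n t ht z hz
    obtain ⟨i, -, rfl⟩ := mem_image.1 hz
    refine add_mul_mul_mem_Icc (hr₀ i) (hrm i) (Nat.mul_le_mul_left m ?_) ht
    exact Nat.add_le_add_left (single_le_sum (fun j _ => Nat.zero_le (c j)) (mem_univ i)) 1
  · intro t S hS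
    have hmem : ∀ i, f (i, t) ∈ S := fun i => hS (mem_image_of_mem _ (mem_univ i))
    have hne : ∀ {i j}, i ≠ j → f (i, t) ≠ f (j, t) := fun hij h =>
      hij (congrArg Prod.fst (hf h))
    refine makerWinsRado_of_isCherry (v := f (0, t)) (u := f (1, t)) (w := f (2, t)) ?_
      (hne (by decide)) (hne (by decide)) (hne (by decide)) (hmem 0) (hmem 1) (hmem 2)
    simpa [f, r, c] using hc.shift (m * t : ℕ)

/-- Theorem 4.1(i) of the paper. For the equation `α x - β y = b` with
`α, β` distinct positive integers, having a solution in two distinct positive integers,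
if `p·n^{1/3} → ∞` then w.h.p. Maker wins the `(A,b)`-game on `[n]_p`. -/
theorem not_star_maker_win (α β : ℤ) (hα : 0 < α) (hβ : 0 < β) (hne : α ≠ β) (b : ℤ)
    (hAb : ∃ x y : ℕ, 0 < x ∧ 0 < y ∧ x ≠ y ∧ α * (x : ℤ) - β * (y : ℤ) = b)
    (p : ℕ → ℝ) (hp : ∀ n, 0 ≤ p n ∧ p n ≤ 1)
    (hpinf : Filter.Tendsto (fun n : ℕ => p n * (n : ℝ) ^ ((1 : ℝ) / 3))
      Filter.atTop Filter.atTop) :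
    Filter.Tendsto
      (fun n => probRandomSubset n (p n) (fun S =>
        MakerWinsRado (Matrix.of fun _ : Fin 1 => ![α, -β]) (fun _ => b) S))
      Filter.atTop (nhds 1) := by
  lift α to ℕ using hα.le
  lift β to ℕ using hβ.le
  obtain ⟨x, y, -, -, -, hxy⟩ := hAb
  obtain ⟨K, hK, C, hC, hC3, hCn, hCwin⟩ := exists_disjoint_cherries (by exact_mod_cast hα)
    (by exact_mod_cast hβ) (by exact_mod_cast hne) hxy
  have hp3 : ∀ n, p n ^ 3 ≤ 1 := fun n => pow_le_one₀ (hp n).1 (hp n).2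
  have hcube : Tendsto (fun n : ℕ => p n ^ 3 * n) atTop atTop := by
    refine ((tendsto_pow_atTop three_ne_zero).comp hpinf).congr fun n => ?_
    rw [comp_apply, mul_pow, ← Real.rpow_mul_natCast (Nat.cast_nonneg n)]
    norm_num
  have hfail : Tendsto (fun n => (1 - p n ^ 3) ^ (n / K)) atTop (𝓝 0) :=
    tendsto_one_sub_pow_nhds_zero hp3
      (tendsto_mul_natCast_div_atTop (fun n => pow_nonneg (hp n).1 3) hp3 hK hcube)
  refine tendsto_of_tendsto_of_tendsto_of_le_of_le (by simpa using tendsto_const_nhds.sub hfail)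
    tendsto_const_nhds (fun n => ?_) fun n => probRandomSubset_le_one (hp n).1 (hp n).2 _
  exact one_sub_pow_le_probRandomSubset (hp n).1 (hp n).2 hC (hCn n) hC3
    fun S t _ hCS => hCwin t S hCS
end

section
/- Let α, β be distinct positive integers and let A be the 2×3 integer matrix with rows (α, −β, 0) and (0, α, −β). Then for every n, Breaker wins the (A,0)-game on [n], i.e. Breaker has a winning strategy in the deterministic (non-random, non-biased) game on the full board [n]. -/
variable {V : Type*} [DecidableEq V]

/-!
Breaker plays a pairing strategy: an involution `σ` such that every set won by Maker contains
a pair `u ≠ σ u`; answering each move `x` by `σ x` whenever possible, Breaker owns a point of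
every such pair. Dividing `α, β` by their gcd, and reversing the triples if `α < β`, let `a > b`
be coprime. The solutions of `a x = b y` chain `ℕ` into progressions `c, c·a/b, c·(a/b)², …`
and every geometric triple has the form `b²e, abe, a²e`; matching positions `2i` and `2i + 1`
of every chain, one of its two consecutive pairs is matched.
-/

open Finset

def IsPairingStrategy {α : Type*} (σ : α → α) (win : Finset α → Prop) : Prop :=
  Function.Involutive σ ∧ ∀ N, win N → ∃ u ∈ N, σ u ∈ N ∧ σ u ≠ u

/-- With `R` the free points and `M` Maker's points, the partner of every non-fixed point of
Maker belongs to Breaker. -/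
def PairingInvariant {α : Type*} (σ : α → α) (R M : Finset α) : Prop :=
  ∀ u ∈ M, σ u ≠ u → σ u ∉ M ∧ σ u ∉ R

section Pairing

variable {α : Type*} {σ : α → α} {win : Finset α → Prop} {R M : Finset α}

theorem IsPairingStrategy.mono {win' : Finset α → Prop} (hσ : IsPairingStrategy σ win)
    (h : ∀ N, win' N → win N) : IsPairingStrategy σ win' :=
  ⟨hσ.1, fun N hN => hσ.2 N (h N hN)⟩

theorem PairingInvariant.of_empty_right : PairingInvariant σ R ∅ := by
  simp [PairingInvariant]

theorem PairingInvariant.not_win (hσ : IsPairingStrategy σ win) (h : PairingInvariant σ ∅ M) :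
    ¬ win M := by
  intro hw
  obtain ⟨u, hu, hσu, hne⟩ := hσ.2 M hw
  exact (h u hu hne).1 hσu

theorem PairingInvariant.insert_erase_erase [DecidableEq α] (hσ : Function.Involutive σ)
    (h : PairingInvariant σ R M) {x y : α} (hx : x ∈ R) (hy : σ x ∈ R.erase x → y = σ x) :
    PairingInvariant σ ((R.erase x).erase y) (insert x M) := by
  intro u hu hne
  rcases mem_insert.mp hu with rfl | hu
  · refine ⟨?_, fun hmem => (mem_erase.mp hmem).1 (hy (mem_of_mem_erase hmem)).symm⟩
    rw [mem_insert, not_or]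
    refine ⟨hne, fun hm => (h _ hm ?_).2 ?_⟩ <;> rw [hσ u]
    exacts [Ne.symm hne, hx]
  · obtain ⟨hM, hR⟩ := h u hu hne
    refine ⟨?_, fun hmem => hR (mem_of_mem_erase (mem_of_mem_erase hmem))⟩
    rw [mem_insert, not_or]
    exact ⟨fun e => hR (e ▸ hx), hM⟩

theorem PairingInvariant.breakerWinsAux_true [DecidableEq α] (hσ : IsPairingStrategy σ win)
    (h : PairingInvariant σ R M) : breakerWinsAux win true R M := by
  induction R using Finset.strongInduction generalizing M with
  | H R ih =>
  rw [breakerWinsAux]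
  split_ifs with hR
  · intro x hx
    rw [breakerWinsAux]
    split_ifs with hR'
    · obtain ⟨y, hy, hyσ⟩ : ∃ y ∈ R.erase x, σ x ∈ R.erase x → y = σ x := by
        by_cases hσx : σ x ∈ R.erase x
        · exact ⟨σ x, hσx, fun _ => rfl⟩
        · obtain ⟨y, hy⟩ := hR'
          exact ⟨y, hy, fun h => absurd h hσx⟩
      exact ⟨y, hy, ih _ ((erase_subset _ _).trans_ssubset (erase_ssubset hx))
        (h.insert_erase_erase hσ.1 hx hyσ)⟩
    · rw [not_nonempty_iff_eq_empty] at hR'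
      have h' := h.insert_erase_erase hσ.1 hx (y := x) (by simp [hR'])
      rw [hR', erase_empty] at h'
      exact h'.not_win hσ
  · rw [not_nonempty_iff_eq_empty.mp hR] at h
    exact h.not_win hσ

theorem IsPairingStrategy.breakerWins [DecidableEq α] (hσ : IsPairingStrategy σ win)
    (X : Finset α) : BreakerWins win X :=
  PairingInvariant.of_empty_right.breakerWinsAux_true hσ

end Pairing

def HasGeomTriple (a b : ℕ) (N : Finset ℕ) : Prop :=
  ∃ x ∈ N, ∃ y ∈ N, ∃ z ∈ N, x ≠ y ∧ y ≠ z ∧ a * x = b * y ∧ a * y = b * z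

namespace HasGeomTriple

variable {a b : ℕ} {N : Finset ℕ}

theorem symm (h : HasGeomTriple a b N) : HasGeomTriple b a N := by
  obtain ⟨x, hx, y, hy, z, hz, hxy, hyz, h₁, h₂⟩ := h
  exact ⟨z, hz, y, hy, x, hx, hyz.symm, hxy.symm, h₂.symm, h₁.symm⟩

theorem of_mul_right {g : ℕ} (hg : 0 < g) (h : HasGeomTriple (a * g) (b * g) N) :
    HasGeomTriple a b N := by
  obtain ⟨x, hx, y, hy, z, hz, hxy, hyz, h₁, h₂⟩ := h
  refine ⟨x, hx, y, hy, z, hz, hxy, hyz, ?_, ?_⟩ <;> apply Nat.eq_of_mul_eq_mul_right hg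
  · rwa [mul_right_comm, mul_right_comm b]
  · rwa [mul_right_comm, mul_right_comm b]

end HasGeomTriple

theorem Nat.Coprime.exists_eq_geom {a b x y z : ℕ} (hcop : a.Coprime b) (hb : b ≠ 0)
    (h₁ : a * x = b * y) (h₂ : a * y = b * z) :
    ∃ e, x = b ^ 2 * e ∧ y = a * b * e ∧ z = a ^ 2 * e := by
  obtain ⟨c, rfl⟩ : b ∣ x := hcop.symm.dvd_of_dvd_mul_left ⟨y, h₁⟩
  have hb₀ : 0 < b := Nat.pos_of_ne_zero hb
  obtain rfl : y = a * c := Nat.eq_of_mul_eq_mul_left hb₀ (by rw [← h₁]; ring)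
  obtain ⟨e, rfl⟩ : b ∣ c :=
    (Nat.Coprime.pow_left 2 hcop).symm.dvd_of_dvd_mul_left ⟨z, by rw [← h₂]; ring⟩
  exact ⟨e, by ring, by ring, Nat.eq_of_mul_eq_mul_left hb₀ (by rw [← h₂]; ring)⟩

theorem padicValNat_mul_left_of_coprime {a b : ℕ} (ha : a ≠ 1) (hcop : a.Coprime b)
    (hb : b ≠ 0) (c : ℕ) : padicValNat a (b * c) = padicValNat a c := by
  rcases eq_or_ne c 0 with rfl | hc
  · simp
  refine eq_of_forall_le_iff fun k => ?_
  rw [← Nat.pow_dvd_iff_le_padicValNat ha (mul_ne_zero hb hc),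
    ← Nat.pow_dvd_iff_le_padicValNat ha hc]
  exact (Nat.Coprime.pow_left k hcop).dvd_mul_left

/-- `x` sits at position `padicValNat a x` of its chain; at an even position it is matched with
its successor `x / b * a`, or fixed if the chain ends there. -/
def geomPartner (a b x : ℕ) : ℕ :=
  if Even (padicValNat a x) then if b ∣ x then x / b * a else x else x / a * b

section GeomPartner

variable {a b c : ℕ}

theorem geomPartner_mul_left (ha : 1 < a) (hb : b ≠ 0) (hcop : a.Coprime b)
    (hc : Even (padicValNat a c)) : geomPartner a b (b * c) = a * c := by
  rw [geomPartner, padicValNat_mul_left_of_coprime ha.ne' hcop hb, if_pos hc,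
    if_pos (dvd_mul_right b c), Nat.mul_div_cancel_left _ (Nat.pos_of_ne_zero hb), mul_comm]

theorem geomPartner_base_mul (ha : 1 < a) (hc₀ : c ≠ 0) (hc : Even (padicValNat a c)) :
    geomPartner a b (a * c) = b * c := by
  rw [geomPartner, padicValNat_base_mul ha hc₀, if_neg (by simpa [Nat.even_add_one] using hc),
    Nat.mul_div_cancel_left _ (by omega), mul_comm]

theorem geomPartner_involutive (ha : 1 < a) (hb : b ≠ 0) (hcop : a.Coprime b) :
    Function.Involutive (geomPartner a b) := by
  intro x
  rcases eq_or_ne x 0 with rfl | hx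
  · simp [geomPartner]
  by_cases hv : Even (padicValNat a x)
  · by_cases hbx : b ∣ x
    · obtain ⟨c, rfl⟩ := hbx
      rw [padicValNat_mul_left_of_coprime ha.ne' hcop hb] at hv
      rw [geomPartner_mul_left ha hb hcop hv,
        geomPartner_base_mul ha (right_ne_zero_of_mul hx) hv]
    · simp only [geomPartner, if_pos hv, if_neg hbx]
  · obtain ⟨c, rfl⟩ : a ∣ x := by
      simpa using (Nat.pow_dvd_iff_le_padicValNat (k := 1) ha.ne' hx).mpr
        (Nat.pos_of_ne_zero fun h => hv (by simp [h]))
    have hc₀ : c ≠ 0 := right_ne_zero_of_mul hx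
    rw [padicValNat_base_mul ha hc₀, Nat.even_add_one, not_not] at hv
    rw [geomPartner_base_mul ha hc₀ hv, geomPartner_mul_left ha hb hcop hv]

/-- Of the triple `b²e, abe, a²e`, the first two are partners if `e` has even `a`-adic
valuation, the last two otherwise. -/
theorem HasGeomTriple.exists_geomPartner_pair {N : Finset ℕ} (ha : 1 < a) (hb : b ≠ 0)
    (hcop : a.Coprime b) (h : HasGeomTriple a b N) :
    ∃ u ∈ N, geomPartner a b u ∈ N ∧ geomPartner a b u ≠ u := by
  obtain ⟨x, hx, y, hy, z, hz, hxy, hyz, h₁, h₂⟩ := h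
  obtain ⟨e, rfl, rfl, rfl⟩ := hcop.exists_eq_geom hb h₁ h₂
  by_cases hv : Even (padicValNat a e)
  · have hσ : geomPartner a b (b ^ 2 * e) = a * b * e := by
      rw [sq, mul_assoc, geomPartner_mul_left ha hb hcop
        (by rwa [padicValNat_mul_left_of_coprime ha.ne' hcop hb]), mul_assoc]
    exact ⟨_, hx, hσ ▸ hy, hσ ▸ hxy.symm⟩
  · have he : e ≠ 0 := by rintro rfl; simp at hxy
    have hσ : geomPartner a b (a * b * e) = a ^ 2 * e := by
      rw [show a * b * e = b * (a * e) by ring, geomPartner_mul_left ha hb hcop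
        (by rwa [padicValNat_base_mul ha he, Nat.even_add_one]), ← mul_assoc, sq]
    exact ⟨_, hy, hσ ▸ hz, hσ ▸ hyz.symm⟩

end GeomPartner

theorem exists_isPairingStrategy_hasGeomTriple {a b : ℕ} (ha : 0 < a) (hb : 0 < b)
    (hab : a ≠ b) : ∃ σ, IsPairingStrategy σ (HasGeomTriple a b) := by
  obtain ⟨g, a, b, hg, hcop, rfl, rfl⟩ := Nat.exists_coprime' (Nat.gcd_pos_of_pos_left b ha)
  have ha₀ : a ≠ 0 := left_ne_zero_of_mul (Nat.pos_iff_ne_zero.mp ha)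
  have hb₀ : b ≠ 0 := left_ne_zero_of_mul (Nat.pos_iff_ne_zero.mp hb)
  suffices ∃ σ, IsPairingStrategy σ (HasGeomTriple a b) from
    this.imp fun σ hσ => hσ.mono fun N => HasGeomTriple.of_mul_right hg
  have hab' : a ≠ b := fun h => hab (by rw [h])
  rcases hab'.lt_or_gt with h | h
  · exact ⟨geomPartner b a, geomPartner_involutive (by omega) ha₀ hcop.symm,
      fun N hN => hN.symm.exists_geomPartner_pair (by omega) ha₀ hcop.symm⟩
  · exact ⟨geomPartner a b, geomPartner_involutive (by omega) hb₀ hcop,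
      fun N hN => hN.exists_geomPartner_pair (by omega) hb₀ hcop⟩

theorem hasGeomTriple_of_radoWin {α β : ℕ} {N : Finset ℕ}
    (h : RadoWin (Matrix.of ![![(α : ℤ), -β, 0], ![0, (α : ℤ), -β]]) (fun _ => 0) N) :
    HasGeomTriple α β N := by
  obtain ⟨x, hx, hmem, hA⟩ := h
  have h₀ : (α : ℤ) * x 0 = β * x 1 := by
    simpa [Matrix.mulVec, dotProduct, Fin.sum_univ_three, ← sub_eq_add_neg, sub_eq_zero] using congrFun hA 0
  have h₁ : (α : ℤ) * x 1 = β * x 2 := by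
    simpa [Matrix.mulVec, dotProduct, Fin.sum_univ_three, ← sub_eq_add_neg, sub_eq_zero] using congrFun hA 1
  exact ⟨x 0, hmem 0, x 1, hmem 1, x 2, hmem 2, hx.ne (by decide), hx.ne (by decide),
    by exact_mod_cast h₀, by exact_mod_cast h₁⟩

/-- Theorem 4.1(iii) of the paper. For distinct positive integers `α, β`
and the `2×3` matrix with rows `(α, -β, 0)` and `(0, α, -β)`, Breaker wins the `(A,0)`-game
on the full board `[n]` for every `n`. -/
theorem geometric_progression_breaker_win (α β : ℤ) (hα : 0 < α) (hβ : 0 < β)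
    (hne : α ≠ β) (n : ℕ) :
    BreakerWinsRado (Matrix.of ![![α, -β, 0], ![0, α, -β]]) (fun _ => (0 : ℤ))
      (Finset.Icc 1 n) := by
  lift α to ℕ using hα.le
  lift β to ℕ using hβ.le
  obtain ⟨σ, hσ⟩ := exists_isPairingStrategy_hasGeomTriple (a := α) (b := β) (by omega)
    (by omega) (by omega)
  exact (hσ.mono fun N => hasGeomTriple_of_radoWin).breakerWins _
end

section
/- Let α, β be distinct coprime positive integers and b an integer such that αx − βy = b has a solution in two distinct positive integers. Then for all sufficiently large n, there exists a collection of at least n/(6α²β²) pairwise disjoint 3-element subsets of [n], each of the form {(αx − b)/β, x, (βx + b)/α} for some positive integer x, where all three elements are distinct positive integers belonging to [n]. -/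
set_option maxHeartbeats 1000000 in
/-- Auxiliary version of the statement, assuming `a < c`. -/
theorem key_lemma_good_triples (a c : ℤ) (ha : 0 < a) (hac : a < c)
    (hcop : IsCoprime a c) (b : ℤ) :
    ∃ N : ℕ, ∀ n : ℕ, N ≤ n → ∃ T : Finset (Finset ℕ),
      (n : ℝ) / (6 * (a : ℝ) ^ 2 * (c : ℝ) ^ 2) ≤ (T.card : ℝ) ∧
      (T : Set (Finset ℕ)).Pairwise (fun s t => Disjoint s t) ∧
      ∀ t ∈ T, ∃ x u v : ℕ,
        c * (u : ℤ) = a * (x : ℤ) - b ∧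
        a * (v : ℤ) = c * (x : ℤ) + b ∧
        u ≠ x ∧ x ≠ v ∧ u ≠ v ∧
        t = {u, x, v} ∧ t ⊆ Finset.Icc 1 n := by
  obtain ⟨p, q, hpq⟩ := hcop
  obtain ⟨x₀, u₀, v₀, hu0, hv0⟩ :
      ∃ x₀ u₀ v₀ : ℤ, c * u₀ = a * x₀ - b ∧ a * v₀ = c * x₀ + b :=
    ⟨b * (p^2*a - q^2*c), -(b * (q^2*a + 2*p*q*a + q^2*c)),
      b * (p^2*c + 2*p*q*c + p^2*a),
      by linear_combination (-(b * (p*a + q*c + 1))) * hpq,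
      by linear_combination (b * (p*a + q*c + 1)) * hpq⟩
  have ha1 : (1:ℤ) ≤ a := ha
  have hc0 : (0:ℤ) < c := lt_trans ha hac
  have hc2 : (2:ℤ) ≤ c := by linarith
  set W : ℤ := |x₀| + |b| + c + 1 with hW
  have hx0abs : 0 ≤ |x₀| := abs_nonneg x₀
  have hb0 : 0 ≤ |b| := abs_nonneg b
  have hb1 : -|b| ≤ b := neg_abs_le b
  have hb2 : b ≤ |b| := le_abs_self b
  have hx1 : x₀ ≤ W - |b| - c - 1 := by rw [hW]; linarith [le_abs_self x₀]
  have hx2 : -(W - |b| - c - 1) ≤ x₀ := by rw [hW]; linarith [neg_abs_le x₀]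
  have hW1 : 1 ≤ W := by rw [hW]; linarith
  have hA2 : (1:ℤ) ≤ a^2 := by nlinarith
  have hCW : (2:ℤ) ≤ c*W := by nlinarith [mul_le_mul_of_nonneg_left hW1 hc0.le]
  have hACW : (2:ℤ) ≤ a^2*(c*W) := by
    have h := mul_le_mul hA2 hCW (by norm_num) (by positivity)
    linarith
  have hac1 : (1:ℤ) ≤ a*c := by nlinarith [mul_nonneg (by linarith : (0:ℤ) ≤ a-1) hc0.le]
  have hN0 : (0:ℤ) ≤ 41*a^2*c^3*W := by nlinarith [mul_nonneg (mul_nonneg (mul_nonneg (by norm_num : (0:ℤ) ≤ 41) (by positivity : (0:ℤ) ≤ a^2)) (by positivity : (0:ℤ) ≤ c^3)) (by linarith : (0:ℤ) ≤ W)]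
  refine ⟨(41*a^2*c^3*W).toNat, fun n hn => ?_⟩
  have hm : 41*a^2*c^3*W ≤ (n:ℤ) := by
    calc 41*a^2*c^3*W = ((41*a^2*c^3*W).toNat : ℤ) := (Int.toNat_of_nonneg hN0).symm
      _ ≤ (n:ℤ) := by exact_mod_cast hn
  have hm0 : (0:ℤ) ≤ (n:ℤ) := Int.natCast_nonneg n
  have hcsq : (0:ℤ) < c^2 := by positivity
  -- band parameters
  obtain ⟨T1, T2, hT10, hT12, hXL, hXUm, hA, hB, hcount⟩ :
      ∃ T1 T2 : ℤ, 0 ≤ T1 ∧ T1 ≤ T2 ∧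
        (c + |b| + 1 ≤ x₀ + a*c*T1) ∧
        (c*(x₀ + a*c*T2) + |b| ≤ a*(n:ℤ)) ∧
        (a*(x₀ + a*c*T2) + |b| + 1 ≤ c*(x₀ + a*c*T1)) ∧
        (a^2*(x₀ + a*c*T2) + (a+c)*|b| + 1 ≤ c^2*(x₀ + a*c*T1)) ∧
        ((n:ℤ) ≤ 6*a^2*c^2*(T2 - T1 + 1)) := by
    obtain ⟨K, hK1, hK2⟩ : ∃ K : ℤ, c^2*K ≤ (n:ℤ) ∧ (n:ℤ) < c^2*K + c^2 := by
      refine ⟨(n:ℤ)/c^2, ?_, ?_⟩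
      · have h1 := Int.mul_ediv_add_emod (n:ℤ) (c^2)
        have h2 := Int.emod_nonneg (n:ℤ) (ne_of_gt hcsq)
        linarith
      · have h1 := Int.mul_ediv_add_emod (n:ℤ) (c^2)
        have h2 := Int.emod_lt_of_pos (n:ℤ) hcsq
        linarith
    have e1 : 0 ≤ (a^2 - 1)*(c^3*W) :=
      mul_nonneg (by linarith) (mul_nonneg (by positivity) (by linarith))
    have e2 : 0 ≤ c^2*W*(c - 1) :=
      mul_nonneg (mul_nonneg (by positivity) (by linarith)) (by linarith)
    have e3 : 0 ≤ c^2*(c*W - 1) := mul_nonneg (by positivity) (by linarith)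
    have eCW : 0 ≤ c*W := by linarith
    have hKW : 5*c*W + W ≤ K := by
      have h3 : c^2*(5*c*W + W) ≤ c^2*K := by linarith [e1, e2, e3, hK2, hm]
      exact le_of_mul_le_mul_left h3 hcsq
    have hT20 : 0 ≤ K - W := by linarith
    obtain ⟨J, hJ0, hJ1, hJ2⟩ : ∃ J : ℤ, 0 ≤ J ∧ c*J ≤ a*(K-W) ∧ a*(K-W) < c*J + c := by
      refine ⟨(a*(K-W))/c, Int.ediv_nonneg (mul_nonneg ha.le hT20) hc0.le, ?_, ?_⟩
      · have h1 := Int.mul_ediv_add_emod (a*(K-W)) c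
        have h2 := Int.emod_nonneg (a*(K-W)) (ne_of_gt hc0)
        linarith
      · have h1 := Int.mul_ediv_add_emod (a*(K-W)) c
        have h2 := Int.emod_lt_of_pos (a*(K-W)) hc0
        linarith
    have g2 : J + 5*W ≤ K - W := by
      have h1 : (0:ℤ) ≤ (c - 1 - a) * (K - W) := mul_nonneg (by linarith) hT20
      have h2 : c*(J + 5*W) ≤ c*(K - W) := by linarith [h1, hJ1, hKW]
      exact le_of_mul_le_mul_left h2 hc0
    have gXL : c + |b| + 1 ≤ x₀ + a*c*(J + 5*W) := by
      have h1 : 0 ≤ a*c*J := mul_nonneg (mul_nonneg ha.le hc0.le) hJ0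
      have h2 : 0 ≤ (a*c - 1)*(5*W) := mul_nonneg (by linarith) (by linarith)
      linarith [hx2, h1, h2, hW1]
    have gXU : c*(x₀ + a*c*(K - W)) + |b| ≤ a*(n:ℤ) := by
      have h1 : a*(c^2*K) ≤ a*(n:ℤ) := mul_le_mul_of_nonneg_left hK1 ha.le
      have h2 : c*x₀ ≤ c*(W - |b| - c - 1) := mul_le_mul_of_nonneg_left hx1 hc0.le
      have h3 : 0 ≤ (a - 1)*(c^2*W) :=
        mul_nonneg (by linarith) (mul_nonneg (by positivity) (by linarith))
      have h4 : 0 ≤ c*(c-2)*W := mul_nonneg (mul_nonneg hc0.le (by linarith)) (by linarith)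
      have h5 : 0 ≤ (c-1)*W := mul_nonneg (by linarith) (by linarith)
      have h6 : 0 ≤ c*|b| := mul_nonneg hc0.le hb0
      have hbW : |b| ≤ W := by rw [hW]; linarith
      linarith [h1, h2, h3, h4, h5, h6, hbW]
    have gA : a*(x₀ + a*c*(K - W)) + |b| + 1 ≤ c*(x₀ + a*c*(J + 5*W)) := by
      have h1 : a*(K-W) + 5*c*W - c + 1 ≤ c*(J + 5*W) := by linarith [hJ2]
      have h2 : (a*c)*(a*(K-W) + 5*c*W - c + 1) ≤ (a*c)*(c*(J + 5*W)) :=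
        mul_le_mul_of_nonneg_left h1 (mul_nonneg ha.le hc0.le)
      have h3 : 0 ≤ (c - a) * (x₀ + (W - |b| - c - 1)) :=
        mul_nonneg (by linarith) (by linarith)
      have h5 : 0 ≤ a*c^2*(W-1) :=
        mul_nonneg (mul_nonneg ha.le (by positivity)) (by linarith)
      have h6 : 0 ≤ (a-1)*(c^2*W) :=
        mul_nonneg (by linarith) (mul_nonneg (by positivity) (by linarith))
      have h7 : 0 ≤ c*(c-1)*W := mul_nonneg (mul_nonneg hc0.le (by linarith)) (by linarith)
      have h8 : 0 ≤ (c-1)*|b| := mul_nonneg (by linarith) hb0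
      have h9 : 0 ≤ a*(W - |b|) := mul_nonneg ha.le (by rw [hW]; linarith)
      have h10 : 0 ≤ c^2*W := mul_nonneg (by positivity) (by linarith)
      linarith [h2, h3, h5, h6, h7, h8, h9, h10]
    have gXLU : x₀ + a*c*(K - W) ≥ x₀ + a*c*(J + 5*W) := by
      have := mul_le_mul_of_nonneg_left g2 (mul_nonneg ha.le hc0.le)
      linarith [this]
    have gB : a^2*(x₀ + a*c*(K - W)) + (a+c)*|b| + 1 ≤ c^2*(x₀ + a*c*(J + 5*W)) := by
      have h6 := mul_le_mul_of_nonneg_left gA hc0.le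
      have hXU0 : 0 ≤ x₀ + a*c*(K - W) := by linarith
      have hXUb : |b| ≤ x₀ + a*c*(K - W) := by linarith
      have h8 : 0 ≤ (c - a - 1)*(x₀ + a*c*(K - W)) := mul_nonneg (by linarith) hXU0
      have h7 : 0 ≤ a*((c-a)*(x₀ + a*c*(K - W)) - |b|) :=
        mul_nonneg ha.le (by linarith [h8, hXUb])
      linarith [h6, h7, hc2]
    have hkey : 2*c ≤ 6*a^2*(c-a) := by
      rcases le_or_gt c (3*a^2) with h | h
      · nlinarith
      · have k1 : a ≤ a^2 := by nlinarith
        have k2 : (0:ℤ) ≤ (a^2 - 1) * (c - a) := mul_nonneg (by linarith) (by linarith)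
        nlinarith
    have gC : (n:ℤ) ≤ 6*a^2*c^2*((K - W) - (J + 5*W) + 1) := by
      have hq1 : (c-a)*(K-W) - 5*c*W ≤ c*((K-W) - (J+5*W) + 1) := by linarith [hJ1]
      have hq2 : 2*c*(c*(K-W)) ≤ 6*a^2*(c-a)*(c*(K-W)) :=
        mul_le_mul_of_nonneg_right hkey (mul_nonneg hc0.le hT20)
      have hq3 : (6*a^2*c)*((c-a)*(K-W) - 5*c*W) ≤ (6*a^2*c)*(c*((K-W) - (J+5*W) + 1)) :=
        mul_le_mul_of_nonneg_left hq1 (by positivity)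
      have hq4 : 0 ≤ c^2*(a^2*(c*W) - 1) := mul_nonneg (by positivity) (by linarith)
      have hq5 : 0 ≤ (c^2*W)*(a^2*c - 1) := by
        apply mul_nonneg (mul_nonneg (by positivity) (by linarith))
        nlinarith [hA2, hc2, mul_le_mul hA2 hc2 (by norm_num) (by positivity : (0:ℤ) ≤ a^2)]
      have hq6 : 0 ≤ a^2*c^2*W*(c-1) := by
        apply mul_nonneg (mul_nonneg (mul_nonneg (by positivity) (by positivity)) (by linarith))
        linarith
      linarith [hq2, hq3, hq4, hq5, hq6, hK2, hm]
    exact ⟨J + 5*W, K - W, by linarith, g2, gXL, gXU, gA, gB, gC⟩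
  -- main construction
  have hacpos : (0:ℤ) ≤ a*c := mul_nonneg ha.le hc0.le
  have hmono : ∀ t : ℤ, T1 ≤ t → t ≤ T2 →
      x₀ + a*c*T1 ≤ x₀ + a*c*t ∧ x₀ + a*c*t ≤ x₀ + a*c*T2 := by
    intro t h1 h2
    constructor
    · linarith [mul_le_mul_of_nonneg_left h1 hacpos]
    · linarith [mul_le_mul_of_nonneg_left h2 hacpos]
  have hbounds : ∀ t : ℤ, T1 ≤ t → t ≤ T2 →
      (1 ≤ u₀ + a*a*t ∧ u₀ + a*a*t ≤ (n:ℤ)) ∧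
      (1 ≤ x₀ + a*c*t ∧ x₀ + a*c*t ≤ (n:ℤ)) ∧
      (1 ≤ v₀ + c*c*t ∧ v₀ + c*c*t ≤ (n:ℤ)) := by
    intro t h1 h2
    obtain ⟨m1, m2⟩ := hmono t h1 h2
    have hut : c*(u₀ + a*a*t) = a*(x₀ + a*c*t) - b := by linear_combination hu0
    have hvt : a*(v₀ + c*c*t) = c*(x₀ + a*c*t) + b := by linear_combination hv0
    have hXt0 : 0 ≤ x₀ + a*c*t := by linarith
    have haX : x₀ + a*c*t ≤ a*(x₀ + a*c*t) := by
      linarith [mul_nonneg (by linarith : (0:ℤ) ≤ a - 1) hXt0]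
    have haXU : a*(x₀ + a*c*t) ≤ a*(x₀ + a*c*T2) := mul_le_mul_of_nonneg_left m2 ha.le
    have hcXL : c*(x₀ + a*c*T1) ≤ c*(x₀ + a*c*t) := mul_le_mul_of_nonneg_left m1 hc0.le
    have hXU0 : 0 ≤ x₀ + a*c*T2 := by linarith
    have hacXU : a*(x₀ + a*c*T2) ≤ c*(x₀ + a*c*T2) := by
      linarith [mul_nonneg (by linarith : (0:ℤ) ≤ c - a) hXU0]
    have hamcm : a*(n:ℤ) ≤ c*(n:ℤ) := by
      linarith [mul_nonneg (by linarith : (0:ℤ) ≤ c - a) hm0]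
    refine ⟨⟨?_, ?_⟩, ⟨by linarith, ?_⟩, ⟨?_, ?_⟩⟩
    · have hgt : c*1 < c*(u₀ + a*a*t) := by linarith [hut, haX, m1, hXL, hb2]
      linarith [lt_of_mul_lt_mul_left hgt hc0.le]
    · have hle : c*(u₀ + a*a*t) ≤ c*(n:ℤ) := by
        linarith [hut, haXU, hacXU, hXUm, hb2, hamcm]
      exact le_of_mul_le_mul_left hle hc0
    · have hle : c*(x₀ + a*c*t) ≤ c*(n:ℤ) := by
        linarith [mul_le_mul_of_nonneg_left m2 hc0.le, hXUm, hb0, hamcm]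
      exact le_of_mul_le_mul_left hle hc0
    · have h7 : c*(c + |b| + 1) ≤ c*(x₀ + a*c*T1) := mul_le_mul_of_nonneg_left hXL hc0.le
      have h8 : 0 ≤ (c - 1)*|b| := mul_nonneg (by linarith) hb0
      have hge : a*1 ≤ a*(v₀ + c*c*t) := by linarith [hvt, hcXL, h7, hb1, h8, hCW]
      exact le_of_mul_le_mul_left hge ha
    · have hle : a*(v₀ + c*c*t) ≤ a*(n:ℤ) := by
        linarith [hvt, mul_le_mul_of_nonneg_left m2 hc0.le, hXUm, hb2]
      exact le_of_mul_le_mul_left hle ha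
  have hsep1 : ∀ t s : ℤ, T1 ≤ t → t ≤ T2 → T1 ≤ s → s ≤ T2 →
      a*(x₀ + a*c*t) - c*(x₀ + a*c*s) ≠ b := by
    intro t s ht1 ht2 hs1 hs2 hEq
    have m2 := (hmono t ht1 ht2).2
    have m1 := (hmono s hs1 hs2).1
    have h3 := mul_le_mul_of_nonneg_left m2 ha.le
    have h4 := mul_le_mul_of_nonneg_left m1 hc0.le
    linarith [hA, hb1]
  have hsep2 : ∀ t s : ℤ, T1 ≤ t → t ≤ T2 → T1 ≤ s → s ≤ T2 →
      a^2*(x₀ + a*c*t) - c^2*(x₀ + a*c*s) ≠ (a+c)*b := by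
    intro t s ht1 ht2 hs1 hs2 hEq
    have m2 := (hmono t ht1 ht2).2
    have m1 := (hmono s hs1 hs2).1
    have h3 := mul_le_mul_of_nonneg_left m2 (by positivity : (0:ℤ) ≤ a^2)
    have h4 := mul_le_mul_of_nonneg_left m1 (by positivity : (0:ℤ) ≤ c^2)
    have h5 : (a+c)*(-|b|) ≤ (a+c)*b := mul_le_mul_of_nonneg_left hb1 (by linarith)
    linarith [hB, h5]
  have htn : ∀ z : ℤ, 1 ≤ z → ((z.toNat : ℤ)) = z := fun z hz => Int.toNat_of_nonneg (by linarith)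
  set f : ℤ → Finset ℕ :=
    fun t => ({(u₀ + a*a*t).toNat, (x₀ + a*c*t).toNat, (v₀ + c*c*t).toNat} : Finset ℕ) with hf
  have hdisj : ∀ t s : ℤ, T1 ≤ t → t ≤ T2 → T1 ≤ s → s ≤ T2 → t ≠ s →
      Disjoint (f t) (f s) := by
    intro t s ht1 ht2 hs1 hs2 hts
    obtain ⟨⟨hu1t, _⟩, ⟨hx1t, _⟩, ⟨hv1t, _⟩⟩ := hbounds t ht1 ht2
    obtain ⟨⟨hu1s, _⟩, ⟨hx1s, _⟩, ⟨hv1s, _⟩⟩ := hbounds s hs1 hs2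
    have cut := htn _ hu1t; have cxt := htn _ hx1t; have cvt := htn _ hv1t
    have cus := htn _ hu1s; have cxs := htn _ hx1s; have cvs := htn _ hv1s
    have h1 := hsep1 t s ht1 ht2 hs1 hs2
    have h1' := hsep1 s t hs1 hs2 ht1 ht2
    have h2 := hsep2 t s ht1 ht2 hs1 hs2
    have h2' := hsep2 s t hs1 hs2 ht1 ht2
    rw [Finset.disjoint_left]
    intro e het hes
    simp only [hf, Finset.mem_insert, Finset.mem_singleton] at het hes
    rcases het with rfl | rfl | rfl <;> rcases hes with he | he | he
    · have hE : u₀ + a*a*t = u₀ + a*a*s := by rw [← cut, ← cus, he]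
      exact hts (mul_left_cancel₀ (mul_pos ha ha).ne' (by linarith))
    · have hE : u₀ + a*a*t = x₀ + a*c*s := by rw [← cut, ← cxs, he]
      exact h1 (by linear_combination c*hE - hu0)
    · have hE : u₀ + a*a*t = v₀ + c*c*s := by rw [← cut, ← cvs, he]
      exact h2 (by linear_combination a*c*hE - a*hu0 + c*hv0)
    · have hE : x₀ + a*c*t = u₀ + a*a*s := by rw [← cxt, ← cus, he]
      exact h1' (by linear_combination (-c)*hE - hu0)
    · have hE : x₀ + a*c*t = x₀ + a*c*s := by rw [← cxt, ← cxs, he]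
      exact hts (mul_left_cancel₀ (mul_pos ha hc0).ne' (by linarith))
    · have hE : x₀ + a*c*t = v₀ + c*c*s := by rw [← cxt, ← cvs, he]
      exact h1 (by linear_combination a*hE + hv0)
    · have hE : v₀ + c*c*t = u₀ + a*a*s := by rw [← cvt, ← cus, he]
      exact h2' (by linear_combination (-(a*c))*hE - a*hu0 + c*hv0)
    · have hE : v₀ + c*c*t = x₀ + a*c*s := by rw [← cvt, ← cxs, he]
      exact h1' (by linear_combination (-a)*hE + hv0)
    · have hE : v₀ + c*c*t = v₀ + c*c*s := by rw [← cvt, ← cvs, he]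
      exact hts (mul_left_cancel₀ (mul_pos hc0 hc0).ne' (by linarith))
  refine ⟨(Finset.Icc T1 T2).image f, ?_, ?_, ?_⟩
  · -- cardinality
    have hinj : Set.InjOn f ↑(Finset.Icc T1 T2) := by
      intro t ht s hs hEq
      by_contra hts
      rw [Finset.mem_coe, Finset.mem_Icc] at ht hs
      have hd := hdisj t s ht.1 ht.2 hs.1 hs.2 hts
      have hxm : (x₀ + a*c*t).toNat ∈ f t := by simp [hf]
      exact (Finset.disjoint_left.mp hd hxm) (by rw [← hEq]; exact hxm)
    rw [Finset.card_image_of_injOn hinj, Int.card_Icc]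
    have h1 : (0:ℤ) ≤ T2 + 1 - T1 := by linarith
    have h2 : (((T2 + 1 - T1).toNat : ℕ) : ℝ) = ((T2 + 1 - T1 : ℤ) : ℝ) := by
      rw [← Int.cast_natCast, Int.toNat_of_nonneg h1]
    have hpos : (0:ℝ) < 6 * (a:ℝ)^2 * (c:ℝ)^2 := by
      have h3 : (0:ℝ) < (a:ℝ) := by exact_mod_cast ha
      have h4 : (0:ℝ) < (c:ℝ) := by exact_mod_cast hc0
      positivity
    rw [h2, div_le_iff₀ hpos]
    have h3 : ((n:ℤ):ℝ) ≤ ((6*a^2*c^2*(T2 - T1 + 1) : ℤ) : ℝ) := Int.cast_le.mpr hcount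
    push_cast at h3 ⊢
    nlinarith [h3]
  · -- pairwise disjoint
    intro t1 ht1 t2 ht2 hne12
    simp only [Finset.coe_image, Set.mem_image, Finset.mem_coe, Finset.mem_Icc] at ht1 ht2
    obtain ⟨t, ht, rfl⟩ := ht1
    obtain ⟨s, hs, rfl⟩ := ht2
    exact hdisj t s ht.1 ht.2 hs.1 hs.2 (fun h => hne12 (by rw [h]))
  · -- description of triples
    intro tr htr
    simp only [Finset.mem_image, Finset.mem_Icc] at htr
    obtain ⟨t, ⟨ht1, ht2⟩, rfl⟩ := htr
    obtain ⟨⟨hu1, hu2⟩, ⟨hx1t, hx2t⟩, ⟨hv1, hv2⟩⟩ := hbounds t ht1 ht2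
    have cut := htn _ hu1; have cxt := htn _ hx1t; have cvt := htn _ hv1
    refine ⟨(x₀ + a*c*t).toNat, (u₀ + a*a*t).toNat, (v₀ + c*c*t).toNat, ?_, ?_, ?_, ?_, ?_, ?_, ?_⟩
    · rw [cut, cxt]; linear_combination hu0
    · rw [cvt, cxt]; linear_combination hv0
    · intro hEq
      have hE : u₀ + a*a*t = x₀ + a*c*t := by rw [← cut, ← cxt, hEq]
      exact hsep1 t t ht1 ht2 ht1 ht2 (by linear_combination c*hE - hu0)
    · intro hEq
      have hE : x₀ + a*c*t = v₀ + c*c*t := by rw [← cxt, ← cvt, hEq]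
      exact hsep1 t t ht1 ht2 ht1 ht2 (by linear_combination a*hE + hv0)
    · intro hEq
      have hE : u₀ + a*a*t = v₀ + c*c*t := by rw [← cut, ← cvt, hEq]
      exact hsep2 t t ht1 ht2 ht1 ht2 (by linear_combination a*c*hE - a*hu0 + c*hv0)
    · simp only [hf]
    · intro e he
      simp only [hf, Finset.mem_insert, Finset.mem_singleton] at he
      rw [Finset.mem_Icc]
      rcases he with rfl | rfl | rfl
      · constructor
        · exact_mod_cast (show (1:ℤ) ≤ ((u₀ + a*a*t).toNat : ℤ) by rw [cut]; exact hu1)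
        · exact_mod_cast (show ((u₀ + a*a*t).toNat : ℤ) ≤ (n:ℤ) by rw [cut]; exact hu2)
      · constructor
        · exact_mod_cast (show (1:ℤ) ≤ ((x₀ + a*c*t).toNat : ℤ) by rw [cxt]; exact hx1t)
        · exact_mod_cast (show ((x₀ + a*c*t).toNat : ℤ) ≤ (n:ℤ) by rw [cxt]; exact hx2t)
      · constructor
        · exact_mod_cast (show (1:ℤ) ≤ ((v₀ + c*c*t).toNat : ℤ) by rw [cvt]; exact hv1)
        · exact_mod_cast (show ((v₀ + c*c*t).toNat : ℤ) ≤ (n:ℤ) by rw [cvt]; exact hv2)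

/-- from the proof of Theorem 4.1(i) of the paper. For distinct coprime
positive integers `α, β` and an integer `b` such that `αx - βy = b` has a solution in two
distinct positive integers, for all sufficiently large `n` there is a collection of at
least `n/(6α²β²)` pairwise disjoint "good triples" `{(αx-b)/β, x, (βx+b)/α}` of distinct
elements of `[n]`. -/
theorem many_disjoint_good_triples (α β : ℤ) (hα : 0 < α) (hβ : 0 < β) (hne : α ≠ β)
    (hcop : IsCoprime α β) (b : ℤ)
    (hsol : ∃ x y : ℕ, 0 < x ∧ 0 < y ∧ x ≠ y ∧ α * (x : ℤ) - β * (y : ℤ) = b) :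
    ∃ N : ℕ, ∀ n : ℕ, N ≤ n → ∃ T : Finset (Finset ℕ),
      (n : ℝ) / (6 * (α : ℝ) ^ 2 * (β : ℝ) ^ 2) ≤ (T.card : ℝ) ∧
      (T : Set (Finset ℕ)).Pairwise (fun s t => Disjoint s t) ∧
      ∀ t ∈ T, ∃ x u v : ℕ,
        β * (u : ℤ) = α * (x : ℤ) - b ∧
        α * (v : ℤ) = β * (x : ℤ) + b ∧
        u ≠ x ∧ x ≠ v ∧ u ≠ v ∧
        t = {u, x, v} ∧ t ⊆ Finset.Icc 1 n := by
  rcases lt_trichotomy α β with h | h | h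
  · exact key_lemma_good_triples α β hα h hcop b
  · exact absurd h hne
  · obtain ⟨N, hN⟩ := key_lemma_good_triples β α hβ h hcop.symm (-b)
    refine ⟨N, fun n hn => ?_⟩
    obtain ⟨T, h1, h2, h3⟩ := hN n hn
    refine ⟨T, ?_, h2, ?_⟩
    · rw [show (6 * (α:ℝ)^2 * (β:ℝ)^2) = 6 * (β:ℝ)^2 * (α:ℝ)^2 from by ring]
      exact h1
    · intro tr htr
      obtain ⟨x, u, v, e1, e2, d1, d2, d3, e4, e5⟩ := h3 tr htr
      refine ⟨x, v, u, by linarith [e2], by linarith [e1], d2.symm, d1.symm, d3.symm, ?_, e5⟩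
      rw [e4]
      ext e
      simp only [Finset.mem_insert, Finset.mem_singleton]
      tauto
end
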